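/- arXiv:2104.00908 — 14 statements merged into one kernel-verified Lean document; each statement's English description precedes it below -/
import Mathlib

section
/- Let K be a field, (Ω,→) an associative semigroup, V a K-vector space, and for every pair (α,β) ∈ Ω² let *_{α,β} : V ⊗ V → V be a K-bilinear product. Define a bilinear product ⋆ on V ⊗ K[Ω] (where K[Ω] is the semigroup algebra of Ω, with basis (δ_α)_{α∈Ω}) by (x ⊗ δ_α) ⋆ (y ⊗ δ_β) = (x *_{α,β} y) ⊗ δ_{α→β}, extended bilinearly. Then ⋆ is associative if, and only if, for all α,β,γ ∈ Ω and all x,y,z ∈ V one has (x *_{α,β} y) *_{α→β,γ} z = x *_{α,β→γ} (y *_{β,γ} z). -/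
open TensorProduct

/-! Both sides of the associativity of `⋆` are trilinear in `(u, v, w)`, so it suffices to test
it on the spanning vectors `x ⊗ δ_α`. There it reads
`((x *_{α,β} y) *_{αβ,γ} z) ⊗ δ_{αβγ} = (x *_{α,βγ} (y *_{β,γ} z)) ⊗ δ_{αβγ}`,
and `x ↦ x ⊗ δ_α` is injective. -/

namespace TensorProduct

variable {K Ω V M : Type*} [CommSemiring K] [AddCommMonoid V] [Module K V]
  [AddCommMonoid M] [Module K M]

theorem tmul_single_one_injective (α : Ω) :
    Function.Injective fun x : V ↦ x ⊗ₜ[K] MonoidAlgebra.single α (1 : K) := by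
  let coeffAt : MonoidAlgebra K Ω →ₗ[K] K :=
    Finsupp.lapply α ∘ₗ (MonoidAlgebra.coeffLinearEquiv K).toLinearMap
  refine Function.LeftInverse.injective (g := TensorProduct.rid K V ∘ₗ coeffAt.lTensor V) ?_
  intro x
  simp [coeffAt]

theorem monoidAlgebra_hom_ext {f g : V ⊗[K] MonoidAlgebra K Ω →ₗ[K] M}
    (h : ∀ x α, f (x ⊗ₜ MonoidAlgebra.single α 1) = g (x ⊗ₜ MonoidAlgebra.single α 1)) :
    f = g := by
  ext x α
  simpa using h x α

theorem monoidAlgebra_trilinear_ext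
    {f g : V ⊗[K] MonoidAlgebra K Ω →ₗ[K] V ⊗[K] MonoidAlgebra K Ω →ₗ[K]
      V ⊗[K] MonoidAlgebra K Ω →ₗ[K] M}
    (h : ∀ (x y z : V) (α β γ : Ω),
      f (x ⊗ₜ MonoidAlgebra.single α 1) (y ⊗ₜ MonoidAlgebra.single β 1)
          (z ⊗ₜ MonoidAlgebra.single γ 1) =
        g (x ⊗ₜ MonoidAlgebra.single α 1) (y ⊗ₜ MonoidAlgebra.single β 1)
          (z ⊗ₜ MonoidAlgebra.single γ 1)) :
    f = g :=
  monoidAlgebra_hom_ext fun x α ↦ monoidAlgebra_hom_ext fun y β ↦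
    monoidAlgebra_hom_ext fun z γ ↦ h x y z α β γ

end TensorProduct

/-- Let `K` be a field, `(Ω, →)` an associative semigroup (written
multiplicatively), `V` a `K`-vector space and, for every pair `(α, β) ∈ Ω²`, a `K`-bilinear
product `st α β : V →ₗ V →ₗ V`. Let `⋆` (here `mul`) be the bilinear product on
`V ⊗ K[Ω]` determined by `(x ⊗ δ_α) ⋆ (y ⊗ δ_β) = (st α β x y) ⊗ δ_{α→β}`.
Then `⋆` is associative if, and only if, for all `α β γ ∈ Ω` and `x y z ∈ V` one has
`(x *_{α,β} y) *_{α→β,γ} z = x *_{α,β→γ} (y *_{β,γ} z)`. -/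
theorem two_parameters_associative_iff
    (K Ω V : Type) [Field K] [Semigroup Ω] [AddCommGroup V] [Module K V]
    (st : Ω → Ω → V →ₗ[K] V →ₗ[K] V)
    (mul : V ⊗[K] MonoidAlgebra K Ω →ₗ[K] V ⊗[K] MonoidAlgebra K Ω →ₗ[K]
      V ⊗[K] MonoidAlgebra K Ω)
    (hmul : ∀ (x y : V) (α β : Ω),
      mul (x ⊗ₜ MonoidAlgebra.single α 1) (y ⊗ₜ MonoidAlgebra.single β 1)
        = (st α β x y) ⊗ₜ MonoidAlgebra.single (α * β) 1) :
    (∀ u v w : V ⊗[K] MonoidAlgebra K Ω, mul (mul u v) w = mul u (mul v w)) ↔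
      (∀ (α β γ : Ω) (x y z : V),
        st (α * β) γ (st α β x y) z = st α (β * γ) x (st β γ y z)) := by
  constructor
  · intro h α β γ x y z
    apply TensorProduct.tmul_single_one_injective (K := K) (α * β * γ)
    simpa [hmul, mul_assoc] using
      h (x ⊗ₜ MonoidAlgebra.single α 1) (y ⊗ₜ MonoidAlgebra.single β 1)
        (z ⊗ₜ MonoidAlgebra.single γ 1)
  · intro h u v w
    have hassoc : mul.compr₂ mul = (LinearMap.llcomp K _ _ _).compl₁₂ mul mul :=
      TensorProduct.monoidAlgebra_trilinear_ext fun x y z α β γ ↦ by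
        simp [hmul, h, mul_assoc]
    exact congr($hassoc u v w)
end

section
/- For every n ≥ 1, the polynomial p_n ∈ ℤ[ω] has degree 2n−2, and its leading coefficient is the Catalan number C_{n−1} = (1/n)·binom(2n−2, n−1) (so C_0 = C_1 = 1, C_2 = 2, C_3 = 5, ...). -/
/-!
Writing `X(X - 1) = X² - X`, only `X² · Σ p_k p_{n-k}` reaches degree `2n - 2`; its coefficient
there is `Σ C_{k-1} C_{n-1-k} = C_{n-1}` by Segner's recurrence. Hence, over any commutative ring,
`p_{i+1}` has degree at most `2i` with coefficient `C_i` in degree `2i`, by strong induction on `i`.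
Over `ℤ` the Catalan numbers do not vanish, so the bound is the degree.
-/

open Polynomial Finset

theorem catalan_ne_zero (n : ℕ) : catalan n ≠ 0 :=
  right_ne_zero_of_mul <| (succ_mul_catalan_eq_centralBinom n).trans_ne n.centralBinom_ne_zero

theorem sum_Ico_one_eq_sum_antidiagonal {M : Type*} [AddCommMonoid M] (f : ℕ → ℕ → M)
    (m : ℕ) :
    ∑ k ∈ Ico 1 (m + 2), f k (m + 2 - k) = ∑ ij ∈ antidiagonal m, f (ij.1 + 1) (ij.2 + 1) := by
  rw [Nat.sum_antidiagonal_eq_sum_range_succ (fun i j => f (i + 1) (j + 1)), sum_Ico_eq_sum_range]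
  refine sum_congr rfl fun k hk => ?_
  have hk : k < m + 1 := mem_range.mp hk
  rw [add_comm 1 k, show m + 2 - (k + 1) = m - k + 1 by omega]

theorem natDegree_le_and_coeff_sum_antidiagonal_mul {R : Type*} [Semiring R]
    {q : ℕ → R[X]} {c : ℕ → R} {d : ℕ} (m : ℕ)
    (hq : ∀ i ≤ m, (q i).natDegree ≤ d * i ∧ (q i).coeff (d * i) = c i) :
    (∑ ij ∈ antidiagonal m, q ij.1 * q ij.2).natDegree ≤ d * m ∧
      (∑ ij ∈ antidiagonal m, q ij.1 * q ij.2).coeff (d * m) =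
        ∑ ij ∈ antidiagonal m, c ij.1 * c ij.2 := by
  have hdeg : ∀ ij ∈ antidiagonal m, d * m = d * ij.1 + d * ij.2 := by
    intro ij hij
    rw [← mul_add, mem_antidiagonal.mp hij]
  have hle : ∀ ij ∈ antidiagonal m, ij.1 ≤ m ∧ ij.2 ≤ m := fun ij hij => by
    have := mem_antidiagonal.mp hij
    omega
  constructor
  · refine natDegree_sum_le_of_forall_le _ _ fun ij hij => ?_
    rw [hdeg ij hij]
    exact natDegree_mul_le_of_le (hq _ (hle ij hij).1).1 (hq _ (hle ij hij).2).1
  · rw [finsetSum_coeff]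
    refine sum_congr rfl fun ij hij => ?_
    obtain ⟨hq₁, hc₁⟩ := hq _ (hle ij hij).1
    obtain ⟨hq₂, hc₂⟩ := hq _ (hle ij hij).2
    rw [hdeg ij hij, coeff_mul_add_eq_of_natDegree_le hq₁ hq₂, hc₁, hc₂]

section

variable {R : Type*} [CommRing R]

theorem natDegree_le_and_coeff_X_mul_X_sub_one_mul_add_X_mul {S Q : R[X]} {d : ℕ}
    (hS : S.natDegree ≤ d) (hQ : Q.natDegree ≤ d) :
    (X * (X - 1) * S + X * Q).natDegree ≤ d + 2 ∧
      (X * (X - 1) * S + X * Q).coeff (d + 2) = S.coeff d := by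
  constructor
  · have hXX : (X * (X - 1) : R[X]).natDegree ≤ 2 := by compute_degree
    refine natDegree_add_le_of_degree_le ?_ ?_
    · exact (natDegree_mul_le_of_le hXX hS).trans_eq (add_comm 2 d)
    · exact (natDegree_mul_le_of_le natDegree_X_le hQ).trans (by omega)
  · have hXX : (X * (X - 1) : R[X]) = X ^ 2 - X := by ring
    rw [hXX, sub_mul, coeff_add, coeff_sub, coeff_X_pow_mul, coeff_X_mul, coeff_X_mul,
      coeff_eq_zero_of_natDegree_lt (by omega : S.natDegree < d + 1),
      coeff_eq_zero_of_natDegree_lt (by omega : Q.natDegree < d + 1)]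
    ring

theorem natDegree_le_and_coeff_of_rec (p : ℕ → R[X]) (hp1 : p 1 = 1)
    (hrec : ∀ n, 2 ≤ n →
      p n = X * (X - 1) * (∑ k ∈ Ico 1 n, p k * p (n - k)) + X * p (n - 1)) (i : ℕ) :
    (p (i + 1)).natDegree ≤ 2 * i ∧ (p (i + 1)).coeff (2 * i) = catalan i := by
  induction i using Nat.strong_induction_on with
  | _ i ih =>
  obtain _ | m := i
  · simp [hp1]
  have hsum := natDegree_le_and_coeff_sum_antidiagonal_mul m fun i hi => ih i (by omega)
  simp only [← sum_Ico_one_eq_sum_antidiagonal (fun k l => p k * p l), ← Nat.cast_mul,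
    ← Nat.cast_sum, ← catalan_succ'] at hsum
  rw [hrec (m + 2) (by omega), mul_add, ← hsum.2]
  exact natDegree_le_and_coeff_X_mul_X_sub_one_mul_add_X_mul hsum.1 (ih m (by omega)).1

end

/-- Let `p : ℕ → ℤ[ω]` satisfy `p 1 = 1` and, for `n ≥ 2`,
`p n = ω(ω−1)·(Σ_{k=1}^{n−1} p k · p (n−k)) + ω · p (n−1)`.
Then for every `n ≥ 1`, the polynomial `p n` has degree `2n − 2` and its leading
coefficient is the Catalan number `C_{n−1}`. -/
theorem pn_degree_and_leadingCoeff
    (p : ℕ → Polynomial ℤ)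
    (hp1 : p 1 = 1)
    (hrec : ∀ n, 2 ≤ n →
      p n = X * (X - 1) * (∑ k ∈ Finset.Ico 1 n, p k * p (n - k)) + X * p (n - 1)) :
    ∀ n, 1 ≤ n → (p n).natDegree = 2 * n - 2 ∧ (p n).leadingCoeff = (catalan (n - 1) : ℤ) := by
  intro n hn
  obtain ⟨i, rfl⟩ : ∃ i, n = i + 1 := ⟨n - 1, by omega⟩
  rw [show 2 * (i + 1) - 2 = 2 * i by omega, Nat.add_sub_cancel]
  obtain ⟨hdeg, hcoeff⟩ := natDegree_le_and_coeff_of_rec p hp1 hrec i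
  have hne : (p (i + 1)).coeff (2 * i) ≠ 0 := by
    rw [hcoeff]
    exact_mod_cast catalan_ne_zero i
  have hdeg_eq := natDegree_eq_of_le_of_coeff_ne_zero hdeg hne
  exact ⟨hdeg_eq, by rw [leadingCoeff, hdeg_eq, hcoeff]⟩
end

section
/- For every n ≥ 2, the monomial ω^n divides p_n in ℤ[ω]; writing p_n = ω^n q_n with q_n ∈ ℤ[ω], the constant term of q_n equals (−1)^n, i.e. q_n(0) = (−1)^n. -/
/-!
Work modulo powers of `ω` in any commutative ring. Once `ω ^ k ∣ p k` for `2 ≤ k < n`, only the two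
outer terms `p 1 * p (n - 1)` and `p (n - 1) * p 1` of the convolution survive modulo `ω ^ n`, so
`p n ≡ ω (ω - 1) · 2 p (n - 1) + ω p (n - 1) = ω (2ω - 1) p (n - 1)  (mod ω ^ (n + 1))`.
Hence `p n ≡ (-1) ^ n ω ^ n (mod ω ^ (n + 1))` by strong induction from `p 2 = ω ^ 2`.
-/

open Polynomial Finset

section Convolution

variable {A : Type*} [CommRing A] {x : A} {a : ℕ → A}

theorem pow_dvd_of_pow_succ_dvd_sub_mul_pow {n : ℕ} {b u : A} (h : x ^ (n + 1) ∣ b - u * x ^ n) :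
    x ^ n ∣ b := by
  have h' : x ^ n ∣ b - u * x ^ n := (pow_dvd_pow x n.le_succ).trans h
  simpa using h'.add (dvd_mul_left (x ^ n) u)

theorem pow_dvd_sum_Ico_mul_sub_two_mul (ha1 : a 1 = 1) {n : ℕ} (hn : 3 ≤ n)
    (hdvd : ∀ k, 2 ≤ k → k < n - 1 → x ^ k ∣ a k) :
    x ^ n ∣ ∑ k ∈ Ico 1 n, a k * a (n - k) - 2 * a (n - 1) := by
  obtain ⟨m, rfl⟩ : ∃ m, n = m + 3 := ⟨n - 3, by omega⟩
  have hinner : x ^ (m + 3) ∣ ∑ k ∈ Ico 2 (m + 2), a k * a (m + 3 - k) := by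
    refine dvd_sum fun k hk => ?_
    obtain ⟨hk2, hkm⟩ := mem_Ico.mp hk
    have hsplit : x ^ (m + 3) = x ^ k * x ^ (m + 3 - k) := by rw [← pow_add]; congr 1; omega
    rw [hsplit]
    exact mul_dvd_mul (hdvd k hk2 (by omega)) (hdvd _ (by omega) (by omega))
  rw [sum_eq_sum_Ico_succ_bot (by omega), sum_Ico_succ_top (by omega)]
  simpa [ha1, two_mul, show m + 3 - (m + 2) = 1 by omega] using hinner

theorem pow_succ_dvd_sub_neg_one_pow_mul_pow (ha1 : a 1 = 1)
    (hrec : ∀ n, 2 ≤ n →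
      a n = x * (x - 1) * (∑ k ∈ Ico 1 n, a k * a (n - k)) + x * a (n - 1)) :
    ∀ n, 2 ≤ n → x ^ (n + 1) ∣ a n - (-1) ^ n * x ^ n := by
  intro n
  induction n using Nat.strong_induction_on with
  | _ n ih =>
    intro hn
    obtain rfl | hn3 := hn.eq_or_lt
    · have ha2 : a 2 = x ^ 2 := by
        rw [hrec 2 le_rfl]
        simp only [Nat.Ico_succ_singleton, sum_singleton, ha1, Nat.add_one_sub_one, mul_one]
        ring
      simp [ha2]
    obtain ⟨m, rfl⟩ : ∃ m, n = m + 1 := ⟨n - 1, by omega⟩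
    obtain ⟨s, hs⟩ := pow_dvd_sum_Ico_mul_sub_two_mul ha1 hn3 fun k hk2 hk =>
      pow_dvd_of_pow_succ_dvd_sub_mul_pow (ih k (by omega) hk2)
    obtain ⟨t, ht⟩ := ih m (by omega) (by omega)
    refine ⟨(x - 1) * s + (2 * x - 1) * t + 2 * (-1) ^ m, ?_⟩
    have hrecm := hrec (m + 1) hn
    simp only [Nat.add_sub_cancel] at hs hrecm
    linear_combination hrecm + x * (x - 1) * hs + x * (2 * x - 1) * ht

end Convolution

/-- Let `p : ℕ → ℤ[ω]` satisfy `p 1 = 1` and, for `n ≥ 2`,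
`p n = ω(ω−1)·(Σ_{k=1}^{n−1} p k · p (n−k)) + ω · p (n−1)`.
Then for every `n ≥ 2` the monomial `ω^n` divides `p n`; writing `p n = ω^n · q`,
the constant term of `q` is `(−1)^n`. -/
theorem pn_eq_pow_mul_q
    (p : ℕ → Polynomial ℤ)
    (hp1 : p 1 = 1)
    (hrec : ∀ n, 2 ≤ n →
      p n = X * (X - 1) * (∑ k ∈ Finset.Ico 1 n, p k * p (n - k)) + X * p (n - 1)) :
    ∀ n, 2 ≤ n → ∃ q : Polynomial ℤ, p n = X ^ n * q ∧ q.coeff 0 = (-1 : ℤ) ^ n := by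
  intro n hn
  obtain ⟨r, hr⟩ := pow_succ_dvd_sub_neg_one_pow_mul_pow hp1 hrec n hn
  exact ⟨(-1) ^ n + X * r, by linear_combination hr, by simp [coeff_zero_eq_eval_zero]⟩
end

section
/- For every odd integer n ≥ 3, the evaluation of the polynomial p_n at ω = 1/2 (in ℚ) is zero: p_n(1/2) = 0. -/
/-!
At `ω = 1/2` the recurrence reads `q n = -¼ Σ q k q (n-k) + ½ q (n-1)`. For odd `n`, in every
pair `(k, n-k)` one index is odd, so by strong induction only the two terms with an index equal
to `1` survive; the sum is `2 q (n-1)` and the two contributions cancel because `2·(-¼) + ½ = 0`.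
-/

open Polynomial

section OddVanishing

variable {R : Type*} [CommSemiring R]

lemma sum_Ico_mul_sub_eq_two_mul_of_odd {q : ℕ → R} {n : ℕ} (hn : 3 ≤ n) (hodd : Odd n)
    (hvanish : ∀ k, 3 ≤ k → k < n → Odd k → q k = 0) :
    ∑ k ∈ Finset.Ico 1 n, q k * q (n - k) = 2 * (q 1 * q (n - 1)) := by
  rw [Finset.sum_eq_add_of_mem 1 (n - 1) (Finset.mem_Ico.2 ⟨le_rfl, by omega⟩)
      (Finset.mem_Ico.2 ⟨by omega, by omega⟩) (by omega),
    Nat.sub_sub_self (by omega), mul_comm (q (n - 1)), two_mul]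
  rintro k hk ⟨hk1, hkn⟩
  rw [Finset.mem_Ico] at hk
  rcases Nat.even_or_odd k with hk_even | hk_odd
  · rw [hvanish (n - k) (by grind) (by omega) (Nat.Odd.sub_even hk.2.le hodd hk_even), mul_zero]
  · rw [hvanish k (by grind) hk.2 hk_odd, zero_mul]

theorem eq_zero_of_odd_of_convolution_rec {q : ℕ → R} {a b : R} (hab : 2 * a + b = 0) (hq1 : q 1 = 1)
    (hrec : ∀ n, 2 ≤ n → q n = a * (∑ k ∈ Finset.Ico 1 n, q k * q (n - k)) + b * q (n - 1)) :
    ∀ n, 3 ≤ n → Odd n → q n = 0 := by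
  intro n
  induction n using Nat.strong_induction_on with
  | _ n ih =>
    intro hn hodd
    have hsum := sum_Ico_mul_sub_eq_two_mul_of_odd hn hodd fun k hk hkn hk_odd ↦ ih k hkn hk hk_odd
    calc q n = (2 * a + b) * q (n - 1) := by rw [hrec n (by omega), hsum, hq1]; ring
      _ = 0 := by rw [hab, zero_mul]

end OddVanishing

/-- Let `p : ℕ → ℤ[ω]` satisfy `p 1 = 1` and, for `n ≥ 2`,
`p n = ω(ω−1)·(Σ_{k=1}^{n−1} p k · p (n−k)) + ω · p (n−1)`.
Then for every odd `n ≥ 3`, the evaluation of `p n` at `ω = 1/2` in `ℚ` vanishes. -/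
theorem pn_eval_one_half_eq_zero
    (p : ℕ → Polynomial ℤ)
    (hp1 : p 1 = 1)
    (hrec : ∀ n, 2 ≤ n →
      p n = X * (X - 1) * (∑ k ∈ Finset.Ico 1 n, p k * p (n - k)) + X * p (n - 1)) :
    ∀ n, 3 ≤ n → Odd n → Polynomial.aeval ((1 : ℚ) / 2) (p n) = 0 := by
  refine eq_zero_of_odd_of_convolution_rec (a := 1 / 2 * (1 / 2 - 1)) (b := 1 / 2) (by norm_num)
    (by simp [hp1]) fun n hn ↦ ?_
  simp [hrec n hn, map_sum]
end

section
/- For every n ≥ 2, the following identity holds in ℤ[ω]: (n−1)·p_n = ω^n · Σ_{k=1}^{n−1} binom(n−1,k)·binom(n−1,k−1)·ω^{n−1−k}·(ω−1)^{k−1}. Equivalently, p_n = (ω^n/(n−1))·Σ_{k=1}^{n−1} binom(n−1,k) binom(n−1,k−1) ω^{n−1−k} (ω−1)^{k−1}. -/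
/-!
The generating series `P = ∑ pₙ tⁿ` satisfies `a P² + (b t - 1) P + t = 0` with `a = ω(ω-1)`,
`b = ω`. Differentiating and multiplying by `Q = 2aP + bt - 1`, whose square is the
discriminant `(1 - bt)² - 4at`, gives a first-order linear differential equation for `P`,
i.e. the three-term recurrence `n pₙ = (2a + b)(2n - 3) pₙ₋₁ - b² (n - 3) pₙ₋₂`.

On the other side, `ωⁿ Hₙ₋₁(ω, ω - 1)`, with `Hₘ(x, y) = ∑ⱼ C(m, j+1) C(m, j) x^(m-1-j) yʲ` the
homogenised Narayana polynomial, satisfies the same recurrence after scaling by `n - 1`,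
because `(m+1)(m-1) Hₘ = m(2m-1)(x+y) Hₘ₋₁ - m(m-1)(x-y)² Hₘ₋₂`; coefficientwise this is an
identity between products of binomial coefficients. The two sequences agree for `n = 1, 2`.
-/

open Finset

def shiftCoeff (c : ℕ → ℤ) : ℕ → ℤ
  | 0 => 0
  | j + 1 => c j

@[simp] lemma shiftCoeff_zero (c : ℕ → ℤ) : shiftCoeff c 0 = 0 := rfl

@[simp] lemma shiftCoeff_succ (c : ℕ → ℤ) (j : ℕ) : shiftCoeff c (j + 1) = c j := rfl

lemma shiftCoeff_sub (c d : ℕ → ℤ) : shiftCoeff (c - d) = shiftCoeff c - shiftCoeff d := by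
  funext j
  cases j <;> simp

section BinaryForm

variable {R : Type*} [CommRing R] (x y : R)

noncomputable def binaryForm (d : ℕ) (c : ℕ → ℤ) : R :=
  ∑ j ∈ range (d + 1), (c j : R) * x ^ (d - j) * y ^ j

lemma x_mul_binaryForm {d : ℕ} {c : ℕ → ℤ} (hc : c (d + 1) = 0) :
    x * binaryForm x y d c = binaryForm x y (d + 1) c := by
  rw [binaryForm, binaryForm, sum_range_succ _ (d + 1), hc, mul_sum]
  simp only [Int.cast_zero, zero_mul, add_zero]
  refine sum_congr rfl fun j hj => ?_
  rw [Nat.succ_sub (Nat.lt_succ_iff.mp (mem_range.mp hj)), pow_succ]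
  ring

lemma y_mul_binaryForm (d : ℕ) (c : ℕ → ℤ) :
    y * binaryForm x y d c = binaryForm x y (d + 1) (shiftCoeff c) := by
  rw [binaryForm, binaryForm, sum_range_succ' _ (d + 1), mul_sum]
  simp only [shiftCoeff_zero, shiftCoeff_succ, Int.cast_zero, zero_mul, add_zero,
    Nat.add_sub_add_right, pow_succ]
  exact sum_congr rfl fun j _ => by ring

lemma add_mul_binaryForm {d : ℕ} {c : ℕ → ℤ} (hc : c (d + 1) = 0) :
    (x + y) * binaryForm x y d c = binaryForm x y (d + 1) (c + shiftCoeff c) := by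
  rw [add_mul, x_mul_binaryForm x y hc, y_mul_binaryForm, binaryForm, binaryForm, binaryForm,
    ← sum_add_distrib]
  simp only [Pi.add_apply, Int.cast_add]
  exact sum_congr rfl fun j _ => by ring

lemma sub_mul_binaryForm {d : ℕ} {c : ℕ → ℤ} (hc : c (d + 1) = 0) :
    (x - y) * binaryForm x y d c = binaryForm x y (d + 1) (c - shiftCoeff c) := by
  rw [sub_mul, x_mul_binaryForm x y hc, y_mul_binaryForm, binaryForm, binaryForm, binaryForm,
    ← sum_sub_distrib]
  simp only [Pi.sub_apply, Int.cast_sub]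
  exact sum_congr rfl fun j _ => by ring

end BinaryForm

lemma succ_mul_choose_eq_sub_mul (n j : ℕ) :
    ((n : ℤ) + 1) * n.choose j = ((n : ℤ) + 1 - j) * (n + 1).choose j := by
  rcases le_or_gt j (n + 1) with h | h
  · have := congrArg (Nat.cast (R := ℤ)) (Nat.choose_mul_succ_eq n j)
    push_cast [Nat.cast_sub h] at this
    linear_combination this
  · simp [Nat.choose_eq_zero_of_lt h, Nat.choose_eq_zero_of_lt (Nat.lt_of_succ_lt h)]

lemma succ_mul_choose_eq_succ_mul (n j : ℕ) :
    ((n : ℤ) + 1) * n.choose j = ((j : ℤ) + 1) * (n + 1).choose (j + 1) := by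
  exact_mod_cast (Nat.add_one_mul_choose_eq n j).trans (mul_comm _ _)

/-- `m` times the Narayana number `N(m, j + 1)`. -/
def narayanaCoeff (m j : ℕ) : ℤ := m.choose (j + 1) * m.choose j

lemma narayanaCoeff_eq_zero_of_le {m j : ℕ} (h : m ≤ j) : narayanaCoeff m j = 0 := by
  simp [narayanaCoeff, Nat.choose_eq_zero_of_lt (Nat.lt_succ_of_le h)]

lemma sq_mul_narayanaCoeff (n j : ℕ) :
    ((n : ℤ) + 1) ^ 2 * narayanaCoeff n j
      = ((n : ℤ) - j) * ((n : ℤ) + 1 - j) * narayanaCoeff (n + 1) j := by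
  have h1 := succ_mul_choose_eq_sub_mul n (j + 1)
  have h2 := succ_mul_choose_eq_sub_mul n j
  simp only [narayanaCoeff]
  push_cast at h1 ⊢
  linear_combination
    ((n : ℤ) + 1) * n.choose j * h1 + ((n : ℤ) - j) * (n + 1).choose (j + 1) * h2

lemma sq_mul_shiftCoeff_narayanaCoeff (n j : ℕ) :
    ((n : ℤ) + 1) ^ 2 * shiftCoeff (narayanaCoeff n) j
      = (j : ℤ) * ((j : ℤ) + 1) * narayanaCoeff (n + 1) j := by
  cases j with
  | zero => simp
  | succ i =>
    have h1 := succ_mul_choose_eq_succ_mul n (i + 1)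
    have h2 := succ_mul_choose_eq_succ_mul n i
    simp only [shiftCoeff_succ, narayanaCoeff]
    push_cast at h1 ⊢
    linear_combination
      ((n : ℤ) + 1) * n.choose i * h1 + ((i : ℤ) + 2) * (n + 1).choose (i + 2) * h2

lemma sq_mul_sq_mul_shiftCoeff_shiftCoeff_narayanaCoeff (k j : ℕ) :
    ((k : ℤ) + 1) ^ 2 * ((k : ℤ) + 2) ^ 2 * shiftCoeff (shiftCoeff (narayanaCoeff k)) j
      = ((j : ℤ) - 1) * j ^ 2 * ((j : ℤ) + 1) * narayanaCoeff (k + 2) j := by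
  cases j with
  | zero => simp
  | succ i =>
    have h1 := sq_mul_shiftCoeff_narayanaCoeff k i
    have h2 := sq_mul_shiftCoeff_narayanaCoeff (k + 1) (i + 1)
    simp only [shiftCoeff_succ] at h2 ⊢
    push_cast at h1 h2 ⊢
    linear_combination ((k : ℤ) + 2) ^ 2 * h1 + (i : ℤ) * ((i : ℤ) + 1) * h2

lemma narayanaCoeff_recurrence (k j : ℕ) :
    ((k : ℤ) + 3) * ((k : ℤ) + 1) * narayanaCoeff (k + 2) j
      = ((k : ℤ) + 2) * (2 * k + 3) *
          (narayanaCoeff (k + 1) + shiftCoeff (narayanaCoeff (k + 1))) j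
        - ((k : ℤ) + 2) * ((k : ℤ) + 1) *
          (narayanaCoeff k - shiftCoeff (narayanaCoeff k)
            - shiftCoeff (narayanaCoeff k - shiftCoeff (narayanaCoeff k))) j := by
  -- after scaling by `(k+1)²(k+2)²`, every term is a polynomial multiple of
  -- `narayanaCoeff (k + 2) j`
  refine mul_left_cancel₀ (by positivity : ((k : ℤ) + 1) ^ 2 * ((k : ℤ) + 2) ^ 2 ≠ 0) ?_
  have h1 := sq_mul_narayanaCoeff (k + 1) j
  have h2 := sq_mul_shiftCoeff_narayanaCoeff (k + 1) j
  have h3 := sq_mul_narayanaCoeff k j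
  have h4 := sq_mul_shiftCoeff_narayanaCoeff k j
  have h5 := sq_mul_sq_mul_shiftCoeff_shiftCoeff_narayanaCoeff k j
  simp only [shiftCoeff_sub, Pi.add_apply, Pi.sub_apply]
  push_cast at h1 h2
  set β : ℤ := ((k : ℤ) + 2) * (2 * k + 3)
  set γ : ℤ := ((k : ℤ) + 2) * ((k : ℤ) + 1)
  linear_combination (-β * ((k : ℤ) + 1) ^ 2 + γ * ((k : ℤ) - j) * ((k : ℤ) + 1 - j)
      - 2 * γ * j * ((j : ℤ) + 1)) * h1 - β * ((k : ℤ) + 1) ^ 2 * h2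
    + γ * ((k : ℤ) + 2) ^ 2 * h3 - 2 * γ * ((k : ℤ) + 2) ^ 2 * h4 + γ * h5

section NarayanaForm

variable {R : Type*} [CommRing R] (x y : R)

noncomputable def narayanaForm (m : ℕ) : R :=
  ∑ j ∈ range m, (narayanaCoeff m j : R) * x ^ (m - 1 - j) * y ^ j

lemma narayanaForm_zero : narayanaForm x y 0 = 0 := rfl

lemma narayanaForm_one : narayanaForm x y 1 = 1 := by
  simp [narayanaForm, narayanaCoeff]

lemma narayanaForm_two : narayanaForm x y 2 = 2 * x + 2 * y := by
  simp [narayanaForm, narayanaCoeff, sum_range_succ]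

lemma narayanaForm_succ (d : ℕ) :
    narayanaForm x y (d + 1) = binaryForm x y d (narayanaCoeff (d + 1)) := by
  simp only [narayanaForm, binaryForm, Nat.add_sub_cancel]

lemma narayanaForm_recurrence (k : ℕ) :
    ((k : R) + 3) * ((k : R) + 1) * narayanaForm x y (k + 2)
      = ((k : R) + 2) * (2 * k + 3) * (x + y) * narayanaForm x y (k + 1)
        - ((k : R) + 2) * ((k : R) + 1) * (x - y) ^ 2 * narayanaForm x y k := by
  cases k with
  | zero =>
    rw [narayanaForm_two, narayanaForm_one, narayanaForm_zero]
    push_cast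
    ring
  | succ i =>
    have hsum := add_mul_binaryForm x y
      (narayanaCoeff_eq_zero_of_le le_rfl : narayanaCoeff (i + 2) (i + 2) = 0)
    have hsq : (x - y) ^ 2 * binaryForm x y i (narayanaCoeff (i + 1))
        = binaryForm x y (i + 2) (narayanaCoeff (i + 1) - shiftCoeff (narayanaCoeff (i + 1))
            - shiftCoeff (narayanaCoeff (i + 1) - shiftCoeff (narayanaCoeff (i + 1)))) := by
      rw [sq, mul_assoc, sub_mul_binaryForm x y (narayanaCoeff_eq_zero_of_le le_rfl),
        sub_mul_binaryForm x y (by simp [narayanaCoeff_eq_zero_of_le])]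
    rw [narayanaForm_succ, narayanaForm_succ, narayanaForm_succ, mul_assoc _ (x + y), hsum,
      mul_assoc _ ((x - y) ^ 2), hsq, binaryForm, binaryForm, binaryForm, mul_sum, mul_sum,
      mul_sum, ← sum_sub_distrib]
    refine sum_congr rfl fun j _ => ?_
    have h := congrArg (Int.cast (R := R)) (narayanaCoeff_recurrence (i + 1) j)
    push_cast at h ⊢
    linear_combination x ^ (i + 2 - j) * y ^ j * h

lemma sum_Ico_eq_narayanaForm (m : ℕ) :
    ∑ k ∈ Ico 1 (m + 1), ((m.choose k * m.choose (k - 1) : ℕ) : R) * x ^ (m - k) * y ^ (k - 1)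
      = narayanaForm x y m := by
  rw [sum_Ico_eq_sum_range, Nat.add_sub_cancel, narayanaForm]
  refine sum_congr rfl fun j _ => ?_
  rw [add_tsub_cancel_left, add_comm 1 j, Nat.sub_add_eq, Nat.sub_right_comm, narayanaCoeff]
  push_cast
  ring

end NarayanaForm

section QuadraticSeries

open PowerSeries

variable {R : Type*} [CommRing R]

lemma derivative_mul_eq_of_quadratic (a b : R) {P : R⟦X⟧}
    (hP : C a * P ^ 2 + (C b * X - 1) * P + X = 0) :
    (1 - C (2 * (2 * a + b)) * X + C (b ^ 2) * X ^ 2) * d⁄dX R P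
      = 1 + C b * X + (C (b ^ 2) * X - C (2 * a + b)) * P := by
  have hD := congrArg (d⁄dX R) hP
  simp only [map_add, map_sub, Derivation.leibniz, Derivation.leibniz_pow, derivative_C,
    derivative_X, derivative_one, map_zero, smul_eq_mul] at hD
  simp only [map_add, map_mul, map_pow, map_ofNat]
  linear_combination (2 * C a * P + C b * X - 1) * hD - (4 * C a * d⁄dX R P + 2 * C b) * hP

lemma coeff_recurrence_of_quadratic (a b : R) {P : R⟦X⟧}
    (hP : C a * P ^ 2 + (C b * X - 1) * P + X = 0) (k : ℕ) :
    ((k : R) + 3) * coeff (k + 3) P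
      = (2 * a + b) * (2 * k + 3) * coeff (k + 2) P - b ^ 2 * k * coeff (k + 1) P := by
  have h := congrArg (coeff (k + 2)) (derivative_mul_eq_of_quadratic a b hP)
  simp only [add_mul, sub_mul, one_mul, mul_assoc, map_add, map_sub, coeff_C_mul,
    coeff_X_pow_mul', coeff_succ_X_mul, coeff_derivative, coeff_one, coeff_X, Nat.cast_add,
    Nat.cast_ofNat, Nat.cast_one, le_add_iff_nonneg_left, zero_le, ↓reduceIte,
    add_tsub_cancel_right, Nat.add_eq_zero_iff, OfNat.ofNat_ne_zero, and_false,
    Nat.reduceEqDiff, mul_zero, add_zero, zero_add] at h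
  linear_combination h

lemma coeff_sq_eq_sum_Ico {P : R⟦X⟧} (h0 : constantCoeff P = 0) (n : ℕ) :
    coeff n (P ^ 2) = ∑ k ∈ Ico 1 n, coeff k P * coeff (n - k) P := by
  rw [sq, coeff_mul, Nat.sum_antidiagonal_eq_sum_range_succ (fun i j => coeff i P * coeff j P),
    sum_range_succ]
  rcases Nat.eq_zero_or_pos n with rfl | hn
  · simp [h0]
  · simp [sum_range_eq_add_Ico _ hn, h0]

lemma quadratic_eq_zero_of_coeff_recurrence (a b : R) {P : R⟦X⟧} (h0 : constantCoeff P = 0)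
    (h1 : coeff 1 P = 1)
    (hrec : ∀ n, 2 ≤ n →
      coeff n P = a * (∑ k ∈ Ico 1 n, coeff k P * coeff (n - k) P) + b * coeff (n - 1) P) :
    C a * P ^ 2 + (C b * X - 1) * P + X = 0 := by
  ext n
  rcases n with _ | _ | n
  · simp [h0]
  · simp [h1, coeff_sq_eq_sum_Ico h0, sub_mul, mul_assoc, h0]
  · simp [coeff_sq_eq_sum_Ico h0, hrec (n + 2) le_add_self, sub_mul, mul_assoc, coeff_X]

theorem three_term_recurrence_of_convolution_recurrence (a b : R) (p : ℕ → R) (hp1 : p 1 = 1)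
    (hrec : ∀ n, 2 ≤ n → p n = a * (∑ k ∈ Ico 1 n, p k * p (n - k)) + b * p (n - 1)) (k : ℕ) :
    ((k : R) + 3) * p (k + 3)
      = (2 * a + b) * (2 * k + 3) * p (k + 2) - b ^ 2 * k * p (k + 1) := by
  set P : R⟦X⟧ := mk fun n => if n = 0 then 0 else p n
  have hcoeff : ∀ n, n ≠ 0 → coeff n P = p n := fun n hn => by simp [P, hn]
  have hP := quadratic_eq_zero_of_coeff_recurrence a b (P := P) (by simp [P]) (by simp [P, hp1])
    fun n hn => by
      rw [hcoeff n (by omega), hcoeff (n - 1) (by omega), hrec n hn]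
      congr 2
      refine sum_congr rfl fun k hk => ?_
      rw [mem_Ico] at hk
      rw [hcoeff k (by omega), hcoeff (n - k) (by omega)]
  simpa [hcoeff] using coeff_recurrence_of_quadratic a b hP k

end QuadraticSeries

theorem eq_of_two_step_recurrence {M : Type*} [Semiring M] [IsLeftCancelMulZero M]
    {α β γ : ℕ → M} (hα : ∀ k, α k ≠ 0) {f g : ℕ → M}
    (hf : ∀ k, α k * f (k + 2) = β k * f (k + 1) + γ k * f k)
    (hg : ∀ k, α k * g (k + 2) = β k * g (k + 1) + γ k * g k)
    (h0 : f 0 = g 0) (h1 : f 1 = g 1) : f = g := by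
  suffices h : ∀ k, f k = g k ∧ f (k + 1) = g (k + 1) from funext fun k => (h k).1
  intro k
  induction k with
  | zero => exact ⟨h0, h1⟩
  | succ k ih => exact ⟨ih.2, mul_left_cancel₀ (hα k) (by rw [hf, hg, ih.1, ih.2])⟩

open Polynomial

/-- Let `p : ℕ → ℤ[ω]` satisfy `p 1 = 1` and, for `n ≥ 2`,
`p n = ω(ω−1)·(Σ_{k=1}^{n−1} p k · p (n−k)) + ω · p (n−1)`.
Then for every `n ≥ 2` one has, in `ℤ[ω]`,
`(n−1)·p n = ω^n · Σ_{k=1}^{n−1} C(n−1,k)·C(n−1,k−1)·ω^{n−1−k}·(ω−1)^{k−1}`. -/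
theorem pn_narayana_formula
    (p : ℕ → Polynomial ℤ)
    (hp1 : p 1 = 1)
    (hrec : ∀ n, 2 ≤ n →
      p n = X * (X - 1) * (∑ k ∈ Finset.Ico 1 n, p k * p (n - k)) + X * p (n - 1)) :
    ∀ n, 2 ≤ n →
      ((n - 1 : ℕ) : Polynomial ℤ) * p n
        = X ^ n * ∑ k ∈ Finset.Ico 1 n,
            (((n - 1).choose k * (n - 1).choose (k - 1) : ℕ) : Polynomial ℤ)
              * X ^ (n - 1 - k) * (X - 1) ^ (k - 1) := by
  have hp2 : p 2 = X ^ 2 := by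
    rw [hrec 2 le_rfl]
    simp only [Nat.Ico_succ_singleton, sum_singleton, hp1, Nat.add_one_sub_one, mul_one]
    ring
  have hscaled : (fun k : ℕ => (k : ℤ[X]) * p (k + 1))
      = fun k => X ^ (k + 1) * narayanaForm X (X - 1) k := by
    refine eq_of_two_step_recurrence (α := fun k => ((k : ℤ[X]) + 3) * ((k : ℤ[X]) + 1))
      (β := fun k => ((k : ℤ[X]) + 2) * (2 * (k : ℤ[X]) + 3) * ((2 * X - 1) * X))
      (γ := fun k => -(((k : ℤ[X]) + 2) * ((k : ℤ[X]) + 1) * X ^ 2)) (fun k => ?_)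
      (fun k => ?_) (fun k => ?_) (by simp [narayanaForm_zero])
      (by simp [narayanaForm_one, hp2])
    · exact_mod_cast (by positivity : ((k + 3) * (k + 1) : ℕ) ≠ 0)
    · have := three_term_recurrence_of_convolution_recurrence (X * (X - 1)) X p hp1 hrec k
      push_cast
      linear_combination ((k : ℤ[X]) + 2) * (k + 1) * this
    · linear_combination X ^ (k + 3) * narayanaForm_recurrence (X : ℤ[X]) (X - 1) k
  intro n hn
  obtain ⟨k, rfl⟩ : ∃ k, n = k + 1 := ⟨n - 1, by omega⟩
  rw [Nat.add_sub_cancel, sum_Ico_eq_narayanaForm]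
  exact congrFun hscaled k
end

section
/- In the formal power series ring ℤ[ω][[X]], let P(X) = Σ_{n≥1} p_n X^n, let R(X) = −P(−X) = Σ_{n≥1} (−1)^{n+1} p_n X^n, and let Q(X) = X + Σ_{n≥2} ω^n X^n. Then Q is a compositional left inverse of R: substituting R into Q gives Q(R(X)) = X. (Equivalently, since R has zero constant term, ω(ω−1)R(X)² + R(X) = X·(1 − ω·R(X)).) -/
/-! The recurrence for `p` is the coefficientwise form of the functional equation
`P = X + ω(ω-1)·P² + ω·X·P` for `P = Σ_{n≥1} p n Xⁿ`. Substituting `X ↦ -X`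
(`PowerSeries.rescale (-1)`, a ring endomorphism) and putting `R = -P(-X)` turns it into
`ω(ω-1)·R² + R = X·(1 - ω·R)`. -/

open Finset PowerSeries

theorem Finset.Nat.sum_antidiagonal_mul_eq_sum_Ico {A : Type*} [NonUnitalNonAssocSemiring A]
    (q : ℕ → A) (hq : q 0 = 0) (n : ℕ) :
    ∑ ij ∈ antidiagonal n, q ij.1 * q ij.2 = ∑ k ∈ Ico 1 n, q k * q (n - k) := by
  rw [Finset.Nat.sum_antidiagonal_eq_sum_range_succ (fun i j => q i * q j)]
  refine (sum_subset (fun k hk => ?_) fun k hk hk' => ?_).symm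
  · simp only [mem_Ico, mem_range] at hk ⊢
    omega
  · simp only [mem_range, mem_Ico, not_and, not_lt] at hk hk'
    obtain rfl | hkn : k = 0 ∨ n - k = 0 := by omega
    · rw [hq, zero_mul]
    · rw [hkn, hq, mul_zero]

namespace PowerSeries

variable {A : Type*} [CommSemiring A]

theorem eq_X_add_C_mul_sq_add_C_mul_X_mul_of_coeff {a b : A} {P : A⟦X⟧}
    (h0 : constantCoeff P = 0) (h1 : coeff 1 P = 1)
    (hrec : ∀ n, 2 ≤ n → coeff n P =
      a * ∑ k ∈ Ico 1 n, coeff k P * coeff (n - k) P + b * coeff (n - 1) P) :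
    P = X + C a * P ^ 2 + C b * X * P := by
  have hsq (n : ℕ) : coeff n (P ^ 2) = ∑ k ∈ Ico 1 n, coeff k P * coeff (n - k) P := by
    rw [sq, coeff_mul]
    exact Finset.Nat.sum_antidiagonal_mul_eq_sum_Ico (coeff · P) (by simpa using h0) n
  ext n
  rcases n with _ | _ | n
  · simp [h0]
  · simp [hsq, h0, h1, mul_comm (C b), mul_assoc]
  · rw [hrec _ (by omega)]
    simp [hsq, coeff_X, mul_comm (C b), mul_assoc, mul_comm b]

theorem rescale_C (a r : A) : rescale a (C r) = C r := by
  ext n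
  rcases n with _ | n <;> simp [coeff_C]

end PowerSeries

/-- Let `p : ℕ → ℤ[ω]` satisfy `p 1 = 1` and, for `n ≥ 2`,
`p n = ω(ω−1)·(Σ_{k=1}^{n−1} p k · p (n−k)) + ω · p (n−1)`.
In `ℤ[ω][[X]]` set `R(X) = −P(−X) = Σ_{n≥1} (−1)^{n+1} p n X^n`. Then `R` satisfies the
identity expressing that `Q(X) = X + Σ_{n≥2} ω^n X^n` is a compositional left inverse of
`R` (i.e. `Q(R(X)) = X`, since `R` has zero constant term):
`ω(ω−1)·R(X)² + R(X) = X·(1 − ω·R(X))`. -/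
theorem koszul_dual_series_inverse
    (p : ℕ → Polynomial ℤ)
    (hp1 : p 1 = 1)
    (hrec : ∀ n, 2 ≤ n →
      p n = Polynomial.X * (Polynomial.X - 1) * (∑ k ∈ Finset.Ico 1 n, p k * p (n - k))
              + Polynomial.X * p (n - 1)) :
    letI R : PowerSeries (Polynomial ℤ) :=
      PowerSeries.mk fun n => if n = 0 then 0 else (-1 : Polynomial ℤ) ^ (n + 1) * p n
    PowerSeries.C (Polynomial.X : Polynomial ℤ)
        * (PowerSeries.C (Polynomial.X : Polynomial ℤ) - 1) * R ^ 2 + R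
      = PowerSeries.X * (1 - PowerSeries.C (Polynomial.X : Polynomial ℤ) * R) := by
  set R : PowerSeries (Polynomial ℤ) :=
    mk fun n => if n = 0 then 0 else (-1 : Polynomial ℤ) ^ (n + 1) * p n
  set P : PowerSeries (Polynomial ℤ) := mk fun n => if n = 0 then 0 else p n
  have hP : P = X + C (Polynomial.X * (Polynomial.X - 1)) * P ^ 2 + C Polynomial.X * X * P := by
    have hcoeff (k : ℕ) (hk : k ≠ 0) : coeff k P = p k := by simp [P, hk]
    refine eq_X_add_C_mul_sq_add_C_mul_X_mul_of_coeff (by simp [P]) (hcoeff 1 one_ne_zero ▸ hp1)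
      fun n hn => ?_
    rw [hcoeff n (by omega), hcoeff (n - 1) (by omega), hrec n hn]
    congr 2
    refine sum_congr rfl fun k hk => ?_
    rw [mem_Ico] at hk
    rw [hcoeff k (by omega), hcoeff (n - k) (by omega)]
  have hRP : R = -rescale (-1) P := by
    ext n
    simp only [R, P, coeff_mk, map_neg, coeff_rescale]
    split_ifs <;> simp [pow_succ]
  have hS := congrArg (rescale (-1 : Polynomial ℤ)) hP
  simp only [map_add, map_sub, map_mul, map_pow, map_neg, map_one, rescale_X, rescale_C] at hS
  rw [hRP]
  linear_combination -hS
end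

section
/- Let (Ω,→) be a finite associative semigroup and K a field. For n ≥ 1, let P(n) be the free K-vector space with basis the words α_1…α_n of length n in Ω. For a word w of length n and words u_1,…,u_n, define w ∘ (u_1,…,u_n) = δ_{w, |u_1||u_2|⋯|u_n|} · (u_1 u_2 ⋯ u_n), where |u| denotes the →-product of the letters of a word u, u_1⋯u_n denotes concatenation, and δ is the Kronecker delta; extend ∘ multilinearly. Let I = Σ_{α∈Ω} α ∈ P(1). Then this composition is operadically associative and unital: (a) for any word w of length n, words u_1,…,u_n of lengths k_1,…,k_n, and words v_{i,j} (1 ≤ i ≤ n, 1 ≤ j ≤ k_i), one has w ∘ (u_1 ∘ (v_{1,1},…,v_{1,k_1}), …, u_n ∘ (v_{n,1},…,v_{n,k_n})) = (w ∘ (u_1,…,u_n)) ∘ (v_{1,1},…,v_{1,k_1},…,v_{n,1},…,v_{n,k_n}); (b) I ∘ w = w and w ∘ (I,…,I) = w for every word w. In other words, (P(n))_{n≥1} with this composition and unit I is a nonsymmetric operad. -/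
/-! On basis words, `w ∘ (u₁, …, uₙ)` is either `0` or the single word `u₁⋯uₙ`, nonzero exactly
when every letter of `w` is the product `|uᵢ|` of the matching word. So both sides of
associativity are `0` or the concatenation of all `vᵢⱼ`, and they are nonzero under the same
condition: by associativity of `→`, `|vᵢ₁⋯vᵢₖ| = |uᵢ|` whenever `uᵢ ∘ (vᵢ₁, …, vᵢₖ) ≠ 0`, and,
the block lengths matching, blockwise composability of the `uᵢ` with the `vᵢⱼ` is composability
of their concatenations. In the unit laws exactly one summand `α` of `I` survives. -/

open scoped Classical

/-- The product `|u| = α₁ → α₂ → ⋯ → αₙ` of the letters of a word, `none` for the empty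
word. -/
def prodOf {Ω : Type} [Semigroup Ω] : List Ω → Option Ω
  | [] => none
  | [α] => some α
  | α :: β :: t => (prodOf (β :: t)).map (α * ·)

/-- The multilinear extension of the operadic composition of `P = (P(n))`:
`mpart w [u₁, …, uₙ]` is the multilinear extension, in the vectors `u₁, …, uₙ`, of
`w ∘ (v₁, …, vₙ) = δ_{w, |v₁|…|vₙ|} · (v₁⋯vₙ)` on basis words `vᵢ`. -/
noncomputable def mpart {K Ω : Type} [Field K] [Semigroup Ω] :
    List Ω → List (List Ω →₀ K) → (List Ω →₀ K)
  | [], [] => Finsupp.single [] 1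
  | [], _ :: _ => 0
  | _ :: _, [] => 0
  | α :: w, u :: us =>
      u.sum fun v c =>
        if prodOf v = some α then c • Finsupp.mapDomain (v ++ ·) (mpart w us) else 0

/-- The full composition `f ∘ (u₁, …, uₙ)`, linear in `f` as well. -/
noncomputable def opComp {K Ω : Type} [Field K] [Semigroup Ω]
    (f : List Ω →₀ K) (us : List (List Ω →₀ K)) : (List Ω →₀ K) :=
  f.sum fun w c => c • mpart w us

namespace List

variable {α β M : Type} [Zero M]

theorem forall₂_flatten_iff {R : α → β → Prop} {L₁ : List (List α)} {L₂ : List (List β)}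
    (hlen : Forall₂ (fun l₁ l₂ => l₂.length = l₁.length) L₁ L₂) :
    Forall₂ R L₁.flatten L₂.flatten ↔ Forall₂ (Forall₂ R) L₁ L₂ := by
  refine ⟨fun h => ?_, fun h => rel_flatten h⟩
  induction hlen with
  | nil => exact .nil
  | @cons l₁ l₂ L₁ L₂ hl _ ih =>
    rw [flatten_cons, flatten_cons] at h
    have hhead := forall₂_take l₁.length h
    have htail := forall₂_drop l₁.length h
    rw [take_left, ← hl, take_left] at hhead
    rw [drop_left, ← hl, drop_left] at htail
    exact .cons hhead (ih htail)

theorem zipWith_ite_eq_map_of_forall₂ {P : α → β → Prop} [∀ a b, Decidable (P a b)]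
    {l₁ : List α} {l₂ : List β} (h : Forall₂ P l₁ l₂) (g : β → M) :
    zipWith (fun a b => if P a b then g b else 0) l₁ l₂ = l₂.map g := by
  induction h with
  | nil => rfl
  | cons hab _ ih => simp [hab, ih]

theorem zero_mem_zipWith_ite {P R : α → β → Prop} [∀ a b, Decidable (P a b)]
    {l₁ : List α} {l₂ : List β} (hR : Forall₂ R l₁ l₂) (hP : ¬ Forall₂ P l₁ l₂)
    (g : α → β → M) :
    (0 : M) ∈ zipWith (fun a b => if P a b then g a b else 0) l₁ l₂ := by
  induction hR with
  | nil => exact absurd .nil hP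
  | @cons a b l₁ l₂ _ _ ih =>
    by_cases hab : P a b
    · simpa using Or.inr (ih fun h => hP (.cons hab h))
    · simp [hab]

end List

section Words

variable {Ω : Type} [Semigroup Ω]

theorem prodOf_eq_none_iff {l : List Ω} : prodOf l = none ↔ l = [] := by
  match l with
  | [] => simp [prodOf]
  | [α] => simp [prodOf]
  | α :: β :: t => simp [prodOf, prodOf_eq_none_iff (l := β :: t)]

theorem prodOf_append {a b : List Ω} {x y : Ω} (ha : prodOf a = some x) (hb : prodOf b = some y) :
    prodOf (a ++ b) = some (x * y) := by
  match a, b with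
  | [α], β :: t =>
    simp only [prodOf, Option.some.injEq] at ha
    simp [prodOf, hb, ha]
  | α :: γ :: t, b =>
    obtain ⟨z, hz, rfl⟩ := Option.map_eq_some_iff.mp ha
    have hzy := prodOf_append hz hb
    rw [List.cons_append] at hzy
    simp [prodOf, hzy, mul_assoc]

/-- The Kronecker delta `δ_{w, |u₁|⋯|uₙ|}` of the composition `w ∘ (u₁, …, uₙ)`. -/
def IsComposable (w : List Ω) (us : List (List Ω)) : Prop :=
  List.Forall₂ (fun α u => prodOf u = some α) w us

theorem isComposable_cons_cons {α : Ω} {w u : List Ω} {us : List (List Ω)} :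
    IsComposable (α :: w) (u :: us) ↔ prodOf u = some α ∧ IsComposable w us :=
  List.forall₂_cons

theorem prodOf_flatten {u : List Ω} {V : List (List Ω)} (h : IsComposable u V) :
    prodOf V.flatten = prodOf u := by
  induction h with
  | nil => rfl
  | @cons β v u V hv _ ih =>
    rw [List.flatten_cons]
    cases hu : prodOf u with
    | none =>
      rw [hu, prodOf_eq_none_iff] at ih
      rw [prodOf_eq_none_iff] at hu
      simp [ih, hu, hv, prodOf]
    | some y =>
      rw [hu] at ih
      rw [prodOf_append hv ih, ← List.singleton_append, prodOf_append rfl hu]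

theorem isComposable_map_flatten_iff {w : List Ω} {us : List (List Ω)}
    {vs : List (List (List Ω))} (h : List.Forall₂ IsComposable us vs) :
    IsComposable w (vs.map List.flatten) ↔ IsComposable w us := by
  induction h generalizing w with
  | nil => rfl
  | cons huV _ ih =>
    match w with
    | [] => simp [IsComposable]
    | α :: w => rw [List.map_cons, isComposable_cons_cons, isComposable_cons_cons, ih,
        prodOf_flatten huV]

theorem isComposable_flatten_iff {us : List (List Ω)} {vs : List (List (List Ω))}
    (hlen : List.Forall₂ (fun (u : List Ω) V => V.length = u.length) us vs) :
    IsComposable us.flatten vs.flatten ↔ List.Forall₂ IsComposable us vs :=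
  List.forall₂_flatten_iff hlen

variable {K : Type} [Field K]

theorem opComp_zero_left (us : List (List Ω →₀ K)) : opComp (0 : List Ω →₀ K) us = 0 := by
  simp [opComp]

theorem opComp_single_one (w : List Ω) (us : List (List Ω →₀ K)) :
    opComp (Finsupp.single w (1 : K)) us = mpart w us := by
  rw [opComp, Finsupp.sum_single_index (by simp), one_smul]

theorem mpart_eq_zero_of_zero_mem {w : List Ω} {us : List (List Ω →₀ K)} (h : 0 ∈ us) :
    mpart w us = 0 := by
  induction us generalizing w with
  | nil => simp at h
  | cons u us ih =>
    match w, List.mem_cons.mp h with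
    | [], _ => rfl
    | α :: w, .inl rfl => simp [mpart]
    | α :: w, .inr hmem => simp [mpart, ih hmem]

theorem mpart_cons_single (α : Ω) (w v : List Ω) (c : K) (us : List (List Ω →₀ K)) :
    mpart (α :: w) (Finsupp.single v c :: us) =
      if prodOf v = some α then c • Finsupp.mapDomain (v ++ ·) (mpart w us) else 0 := by
  rw [mpart, Finsupp.sum_single_index (by simp)]

theorem mpart_cons_sum {ι : Type} (s : Finset ι) (α : Ω) (w : List Ω) (f : ι → List Ω →₀ K)
    (us : List (List Ω →₀ K)) :
    mpart (α :: w) ((∑ i ∈ s, f i) :: us) = ∑ i ∈ s, mpart (α :: w) (f i :: us) := by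
  simp only [mpart]
  exact (Finsupp.sum_finsetSum_index (by simp) (by intros; split_ifs <;> simp [add_smul])).symm

theorem mpart_map_single (w : List Ω) (us : List (List Ω)) :
    mpart w (us.map fun u => Finsupp.single u (1 : K)) =
      if IsComposable w us then Finsupp.single us.flatten 1 else 0 := by
  induction w generalizing us with
  | nil => cases us <;> simp [mpart, IsComposable]
  | cons α w ih =>
    cases us with
    | nil => simp [mpart, IsComposable]
    | cons u us =>
      rw [List.map_cons, mpart_cons_single, ih]
      by_cases hu : prodOf u = some α <;> by_cases hus : IsComposable w us <;>
        simp [isComposable_cons_cons, hu, hus, Finsupp.mapDomain_single]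

theorem opComp_assoc_single {w : List Ω} {us : List (List Ω)} {vs : List (List (List Ω))}
    (hlen : List.Forall₂ (fun (u : List Ω) V => V.length = u.length) us vs) :
    opComp (Finsupp.single w (1 : K))
        (List.zipWith (fun u V => opComp (Finsupp.single u (1 : K))
          (V.map fun v => Finsupp.single v (1 : K))) us vs)
      = opComp (opComp (Finsupp.single w (1 : K)) (us.map fun u => Finsupp.single u (1 : K)))
          (vs.flatten.map fun v => Finsupp.single v (1 : K)) := by
  simp only [opComp_single_one, mpart_map_single]
  by_cases hblocks : List.Forall₂ IsComposable us vs
  · have hflat := mpart_map_single (K := K) w (vs.map List.flatten)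
    simp only [List.map_map, Function.comp_def] at hflat
    rw [List.zipWith_ite_eq_map_of_forall₂ hblocks, hflat, isComposable_map_flatten_iff hblocks]
    split_ifs
    · rw [opComp_single_one, mpart_map_single, if_pos ((isComposable_flatten_iff hlen).2 hblocks),
        List.flatten_flatten]
    · rw [opComp_zero_left]
  · rw [mpart_eq_zero_of_zero_mem (List.zero_mem_zipWith_ite hlen hblocks _)]
    split_ifs
    · rw [opComp_single_one, mpart_map_single,
        if_neg (mt (isComposable_flatten_iff hlen).1 hblocks)]
    · rw [opComp_zero_left]

variable [Fintype Ω]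

theorem opComp_unit_left {w : List Ω} (hw : w ≠ []) :
    opComp (∑ α : Ω, Finsupp.single [α] (1 : K)) [Finsupp.single w (1 : K)]
      = Finsupp.single w (1 : K) := by
  obtain ⟨p, hp⟩ := Option.ne_none_iff_exists'.mp (mt prodOf_eq_none_iff.mp hw)
  rw [opComp, ← Finsupp.sum_finsetSum_index (by simp) (by intros; simp [add_smul])]
  simp [Finsupp.sum_single_index, hp, mpart, Finsupp.mapDomain_single]

theorem mpart_replicate_unit (w : List Ω) :
    mpart w (List.replicate w.length (∑ α : Ω, Finsupp.single [α] (1 : K)))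
      = Finsupp.single w (1 : K) := by
  induction w with
  | nil => rfl
  | cons α w ih =>
    rw [List.length_cons, List.replicate_succ, mpart_cons_sum]
    simp [mpart_cons_single, prodOf, ih, Finsupp.mapDomain_single]

end Words

/-- Let `(Ω,→)` be a finite semigroup and `K` a field. The spaces
`P(n)` spanned by the words of length `n` in `Ω`, with the composition
`w ∘ (u₁,…,uₙ) = δ_{w,|u₁|⋯|uₙ|} · u₁⋯uₙ` (extended multilinearly) and the unit
`I = Σ_{α∈Ω} α`, form a nonsymmetric operad: composition is (a) associative and
(b) unital. -/
theorem words_operad_assoc_and_unital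
    (K Ω : Type) [Field K] [Semigroup Ω] [Fintype Ω] :
    -- (a) operadic associativity
    (∀ (w : List Ω) (us : List (List Ω)) (vs : List (List (List Ω))),
      w ≠ [] → (∀ u ∈ us, u ≠ []) → (∀ V ∈ vs, ∀ v ∈ V, v ≠ []) →
      us.length = w.length → List.Forall₂ (fun (u : List Ω) V => V.length = u.length) us vs →
      opComp (Finsupp.single w (1 : K))
          (List.zipWith
            (fun (u : List Ω) (V : List (List Ω)) =>
              opComp (Finsupp.single u (1 : K)) (V.map fun v => Finsupp.single v (1 : K)))
            us vs)
        = opComp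
            (opComp (Finsupp.single w (1 : K)) (us.map fun u => Finsupp.single u (1 : K)))
            (vs.flatten.map fun v => Finsupp.single v (1 : K))) ∧
    -- (b) unitality
    (∀ w : List Ω, w ≠ [] →
      opComp (∑ α : Ω, Finsupp.single [α] (1 : K)) [Finsupp.single w (1 : K)]
          = Finsupp.single w (1 : K) ∧
      opComp (Finsupp.single w (1 : K))
          (List.replicate w.length (∑ α : Ω, Finsupp.single [α] (1 : K)))
          = Finsupp.single w (1 : K)) := by
  refine ⟨fun w us vs _ _ _ _ hlen => opComp_assoc_single hlen, fun w hw => ?_⟩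
  exact ⟨opComp_unit_left hw, by rw [opComp_single_one, mpart_replicate_unit]⟩
end

section
/- Let Ω be a nonempty set equipped with two binary operations → and ▷. Define φ : Ω² → Ω² by φ(α,β) = (α→β, α▷β) and τ : Ω² → Ω² by τ(α,β) = (β,α). Then (Ω,→,▷) is an extended associative semigroup if, and only if, the following equality of maps Ω³ → Ω³ holds: (Id × φ) ∘ (φ × Id) ∘ (Id × φ) = (φ × Id) ∘ (Id × τ) ∘ (φ × Id). -/
theorem eas_iff_braid_like_general
    (Ω : Type) (arr tri : Ω → Ω → Ω) :
    letI φ : Ω × Ω → Ω × Ω := fun p => (arr p.1 p.2, tri p.1 p.2)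
    letI τ : Ω × Ω → Ω × Ω := fun p => (p.2, p.1)
    letI idφ : Ω × Ω × Ω → Ω × Ω × Ω := fun p => (p.1, φ p.2)
    letI φid : Ω × Ω × Ω → Ω × Ω × Ω :=
      fun p => ((φ (p.1, p.2.1)).1, (φ (p.1, p.2.1)).2, p.2.2)
    letI idτ : Ω × Ω × Ω → Ω × Ω × Ω := fun p => (p.1, τ p.2)
    ((∀ α β γ : Ω, arr α (arr β γ) = arr (arr α β) γ) ∧
     (∀ α β γ : Ω, arr (tri α (arr β γ)) (tri β γ) = tri (arr α β) γ) ∧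
     (∀ α β γ : Ω, tri (tri α (arr β γ)) (tri β γ) = tri α β)) ↔
      idφ ∘ φid ∘ idφ = φid ∘ idτ ∘ φid := by
  -- At `(α, β, γ)` the three coordinates of the two sides are the two sides of axioms (1)–(3).
  simp only [funext_iff, Prod.forall, Function.comp_apply, Prod.mk.injEq, forall_and]

/-- Let `Ω` be a nonempty set with two binary operations `→` (`arr`) and
`▷` (`tri`). Define `φ(α,β) = (α→β, α▷β)` and `τ(α,β) = (β,α)`. Then `(Ω,→,▷)` is an
extended associative semigroup if, and only if,
`(Id × φ) ∘ (φ × Id) ∘ (Id × φ) = (φ × Id) ∘ (Id × τ) ∘ (φ × Id)` as maps `Ω³ → Ω³`. -/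
theorem eas_iff_braid_like
    (Ω : Type) [Nonempty Ω] (arr tri : Ω → Ω → Ω) :
    letI φ : Ω × Ω → Ω × Ω := fun p => (arr p.1 p.2, tri p.1 p.2)
    letI τ : Ω × Ω → Ω × Ω := fun p => (p.2, p.1)
    letI idφ : Ω × Ω × Ω → Ω × Ω × Ω := fun p => (p.1, φ p.2)
    letI φid : Ω × Ω × Ω → Ω × Ω × Ω :=
      fun p => ((φ (p.1, p.2.1)).1, (φ (p.1, p.2.1)).2, p.2.2)
    letI idτ : Ω × Ω × Ω → Ω × Ω × Ω := fun p => (p.1, τ p.2)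
    ((∀ α β γ : Ω, arr α (arr β γ) = arr (arr α β) γ) ∧
     (∀ α β γ : Ω, arr (tri α (arr β γ)) (tri β γ) = tri (arr α β) γ) ∧
     (∀ α β γ : Ω, tri (tri α (arr β γ)) (tri β γ) = tri α β)) ↔
      idφ ∘ φid ∘ idφ = φid ∘ idτ ∘ φid :=
  eas_iff_braid_like_general Ω arr tri
end

section
/- Let K be a field and (A,Φ) a linear extended associative semigroup over K. For a K-vector space V, equip T_A(V) = ⊕_{n≥1} A^{⊗(n−1)} ⊗ V^{⊗n} with the products *_a defined by recursion: u *_a z = u·(a z) for z ∈ V, and u *_a (v·(b z)) = Σ_i (u *_{d_i} v)·(c_i z) where Φ(a⊗b) = Σ_i c_i ⊗ d_i (here u·(a z) appends a ∈ A and z ∈ V to the typed word u). Then (T_A(V), *) is the free Φ-associative algebra generated by V: for every Φ-associative algebra (W, ⋄) and every linear map θ : V → W, there exists a unique linear map Θ : T_A(V) → W such that Θ restricted to V ⊂ T_A(V) equals θ and Θ(u *_a v) = Θ(u) ⋄_a Θ(v) for all u,v ∈ T_A(V) and a ∈ A. -/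
open TensorProduct

section Defs

variable (K : Type) [Field K]
variable (A : Type) [AddCommGroup A] [Module K A]

/-- The "right reassociated" version of `Φ ⊗ Id` acting on `A ⊗ (A ⊗ A)`. -/
noncomputable def phiIdMap (Φ : A ⊗[K] A →ₗ[K] A ⊗[K] A) :
    A ⊗[K] (A ⊗[K] A) →ₗ[K] A ⊗[K] (A ⊗[K] A) :=
  (TensorProduct.assoc K A A A).toLinearMap ∘ₗ (LinearMap.rTensor A Φ) ∘ₗ
    (TensorProduct.assoc K A A A).symm.toLinearMap

/-- `(A, Φ)` is a linear extended associative semigroup (ℓEAS):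
`(Id ⊗ Φ) ∘ (Φ ⊗ Id) ∘ (Id ⊗ Φ) = (Φ ⊗ Id) ∘ (Id ⊗ τ) ∘ (Φ ⊗ Id)` on `A^{⊗3}`. -/
def IsLEAS (Φ : A ⊗[K] A →ₗ[K] A ⊗[K] A) : Prop :=
  (LinearMap.lTensor A Φ) ∘ₗ phiIdMap K A Φ ∘ₗ (LinearMap.lTensor A Φ)
    = phiIdMap K A Φ ∘ₗ (LinearMap.lTensor A (TensorProduct.comm K A A).toLinearMap) ∘ₗ
        phiIdMap K A Φ

variable (V : Type) [AddCommGroup V] [Module K V]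

/-- Evaluation `a ⊗ (x ⊗ y) ↦ x *_a y` of a family of products `st`. -/
noncomputable def evalSt (st : A →ₗ[K] V →ₗ[K] V →ₗ[K] V) :
    A ⊗[K] (V ⊗[K] V) →ₗ[K] V :=
  TensorProduct.lift ((TensorProduct.lift.equiv (RingHom.id K) V V V).toLinearMap ∘ₗ st)

/-- The Sweedler-type trilinear evaluation
`(c ⊗ d) ⊗ ((x ⊗ y) ⊗ z) ↦ (x *_d y) *_c z`. -/
noncomputable def rightTri (st : A →ₗ[K] V →ₗ[K] V →ₗ[K] V) :
    (A ⊗[K] A) ⊗[K] ((V ⊗[K] V) ⊗[K] V) →ₗ[K] V :=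
  evalSt K A V st
    ∘ₗ (TensorProduct.leftComm K V A V).toLinearMap
    ∘ₗ (TensorProduct.map (evalSt K A V st) LinearMap.id)
    ∘ₗ (TensorProduct.tensorTensorTensorComm K A A (V ⊗[K] V) V).toLinearMap
    ∘ₗ (LinearMap.rTensor ((V ⊗[K] V) ⊗[K] V) (TensorProduct.comm K A A).toLinearMap)

/-- `(V, st)` is a `Φ`-associative algebra:
`x *_a (y *_b z) = Σ (x *_{d_i} y) *_{c_i} z` where `Φ(a ⊗ b) = Σ c_i ⊗ d_i`. -/
def IsPhiAssoc (Φ : A ⊗[K] A →ₗ[K] A ⊗[K] A)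
    (st : A →ₗ[K] V →ₗ[K] V →ₗ[K] V) : Prop :=
  ∀ (a b : A) (x y z : V),
    st a x (st b y z) = rightTri K A V st ((Φ (a ⊗ₜ b)) ⊗ₜ ((x ⊗ₜ y) ⊗ₜ z))

/-- The space `T_A(V) = ⊕_{n≥1} A^{⊗(n−1)} ⊗ V^{⊗n}` of `A`-typed words, modelled as
`V ⊗ T(A ⊗ V)`: the typed word `a₁…a_{n−1}x₁…x_n` is `x₁ ⊗ (a₁⊗x₂)⋯(a_{n−1}⊗x_n)`. -/
abbrev TAlg : Type := V ⊗[K] TensorAlgebra K (A ⊗[K] V)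

/-- The inclusion of `V` in `T_A(V)` as typed words of length one. -/
noncomputable def iotaTA : V →ₗ[K] TAlg K A V :=
  (TensorProduct.mk K V (TensorAlgebra K (A ⊗[K] V))).flip 1

/-- The appending operation: `appTA (a ⊗ z) u = u · (a z)`. -/
noncomputable def appTA : (A ⊗[K] V) →ₗ[K] (TAlg K A V →ₗ[K] TAlg K A V) :=
  (LinearMap.lTensorHom V)
    ∘ₗ (LinearMap.mul K (TensorAlgebra K (A ⊗[K] V))).flip
    ∘ₗ (TensorAlgebra.ι K)

/-- The Sweedler-type map `(c ⊗ d) ⊗ ((u ⊗ v) ⊗ z) ↦ (u *_d v) · (c z)` used in the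
recursive definition of the products on `T_A(V)`. -/
noncomputable def recTA (st : A →ₗ[K] TAlg K A V →ₗ[K] TAlg K A V →ₗ[K] TAlg K A V) :
    (A ⊗[K] A) ⊗[K] ((TAlg K A V ⊗[K] TAlg K A V) ⊗[K] V) →ₗ[K] TAlg K A V :=
  (TensorProduct.lift (appTA K A V).flip)
    ∘ₗ (TensorProduct.map (evalSt K A (TAlg K A V) st) (LinearMap.id (M := A ⊗[K] V)))
    ∘ₗ (TensorProduct.tensorTensorTensorComm K A A (TAlg K A V ⊗[K] TAlg K A V) V).toLinearMap
    ∘ₗ (LinearMap.rTensor ((TAlg K A V ⊗[K] TAlg K A V) ⊗[K] V)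
          (TensorProduct.comm K A A).toLinearMap)

/-- `st` satisfies the defining recursion of the products `*_a` of `T_A(V)`:
`u *_a z = u·(a z)` for `z ∈ V`, and `u *_a (v·(b z)) = Σ (u *_{d_i} v)·(c_i z)`
where `Φ(a ⊗ b) = Σ c_i ⊗ d_i`. -/
def SatisfiesRecTA (Φ : A ⊗[K] A →ₗ[K] A ⊗[K] A)
    (st : A →ₗ[K] TAlg K A V →ₗ[K] TAlg K A V →ₗ[K] TAlg K A V) : Prop :=
  (∀ (a : A) (u : TAlg K A V) (z : V), st a u (iotaTA K A V z) = appTA K A V (a ⊗ₜ z) u) ∧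
  (∀ (a b : A) (u v : TAlg K A V) (z : V),
    st a u (appTA K A V (b ⊗ₜ z) v)
      = recTA K A V st ((Φ (a ⊗ₜ b)) ⊗ₜ ((u ⊗ₜ v) ⊗ₜ z)))

/-- The Sweedler-type map `(x ⊗ y) ⊗ (c ⊗ d) ↦ (x *_d y) ⊗ c` used to define the
associative product `⋆` on `V ⊗ A`. -/
noncomputable def sweedlerMul (st : A →ₗ[K] V →ₗ[K] V →ₗ[K] V) :
    (V ⊗[K] V) ⊗[K] (A ⊗[K] A) →ₗ[K] V ⊗[K] A :=
  (LinearMap.rTensor A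
      (evalSt K A V st ∘ₗ (TensorProduct.comm K (V ⊗[K] V) A).toLinearMap))
    ∘ₗ (TensorProduct.assoc K (V ⊗[K] V) A A).symm.toLinearMap
    ∘ₗ (LinearMap.lTensor (V ⊗[K] V) (TensorProduct.comm K A A).toLinearMap)

end Defs

/-!
A linear map out of `T_A(V)` is determined by its values on `V` and by how it transforms
appending `u ↦ u · (a z)`, since every typed word is built from a letter of `V` by appending.
Appending `a z` on the `W` side is `y ↦ y ⋄_a θ z`, and the universal property of the tensor
algebra `T(A ⊗ V)` extends these operators to the candidate `Θ`. That `Θ` respects `*_a` follows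
by induction on the second factor: the step `v ↦ v · (b z)` is exactly where the recursion
defining `*` on `T_A(V)` meets the `Φ`-associativity of `⋄`.
-/

theorem TensorAlgebra.mul_mem_of_mul_ι_mem {R M : Type} [CommSemiring R] [AddCommMonoid M]
    [Module R M] {Q : Submodule R (TensorAlgebra R M)}
    (hι : ∀ m : M, ∀ w ∈ Q, w * TensorAlgebra.ι R m ∈ Q)
    (w : TensorAlgebra R M) : ∀ w' ∈ Q, w' * w ∈ Q := by
  induction w using TensorAlgebra.induction with
  | algebraMap r =>
    intro w' hw'
    rw [← Algebra.commutes, ← Algebra.smul_def]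
    exact Q.smul_mem r hw'
  | ι m => exact hι m
  | mul b c hb hc =>
    intro w' hw'
    rw [← mul_assoc]
    exact hc _ (hb _ hw')
  | add b c hb hc =>
    intro w' hw'
    rw [mul_add]
    exact Q.add_mem (hb _ hw') (hc _ hw')

section TypedWords

variable {K : Type} [Field K] {A : Type} [AddCommGroup A] [Module K A]
variable {V : Type} [AddCommGroup V] [Module K V]

lemma iotaTA_apply (z : V) : iotaTA K A V z = z ⊗ₜ[K] (1 : TensorAlgebra K (A ⊗[K] V)) :=
  rfl

@[simp]
lemma appTA_tmul (t : A ⊗[K] V) (x : V) (w : TensorAlgebra K (A ⊗[K] V)) :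
    appTA K A V t (x ⊗ₜ[K] w) = x ⊗ₜ[K] (w * TensorAlgebra.ι K t) :=
  rfl

@[simp]
lemma evalSt_tmul {M : Type} [AddCommGroup M] [Module K M]
    (st : A →ₗ[K] M →ₗ[K] M →ₗ[K] M) (a : A) (x y : M) :
    evalSt K A M st (a ⊗ₜ[K] (x ⊗ₜ[K] y)) = st a x y := by
  simp [evalSt]

@[simp]
lemma rightTri_tmul {M : Type} [AddCommGroup M] [Module K M]
    (st : A →ₗ[K] M →ₗ[K] M →ₗ[K] M) (c d : A) (x y z : M) :
    rightTri K A M st ((c ⊗ₜ[K] d) ⊗ₜ[K] ((x ⊗ₜ[K] y) ⊗ₜ[K] z)) = st c (st d x y) z := by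
  simp [rightTri]

@[simp]
lemma recTA_tmul (st : A →ₗ[K] TAlg K A V →ₗ[K] TAlg K A V →ₗ[K] TAlg K A V)
    (c d : A) (u v : TAlg K A V) (z : V) :
    recTA K A V st ((c ⊗ₜ[K] d) ⊗ₜ[K] ((u ⊗ₜ[K] v) ⊗ₜ[K] z))
      = appTA K A V (c ⊗ₜ[K] z) (st d u v) := by
  simp [recTA]

def tensorAlgebraSlice (S : Submodule K (TAlg K A V)) :
    Submodule K (TensorAlgebra K (A ⊗[K] V)) :=
  ⨅ x : V, S.comap (TensorProduct.mk K V _ x)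

lemma mem_tensorAlgebraSlice {S : Submodule K (TAlg K A V)} {w : TensorAlgebra K (A ⊗[K] V)} :
    w ∈ tensorAlgebraSlice S ↔ ∀ x : V, x ⊗ₜ[K] w ∈ S := by
  simp [tensorAlgebraSlice]

lemma appTA_mem_of_tmul_mem {S : Submodule K (TAlg K A V)}
    (happ : ∀ (b : A) (z : V), ∀ u ∈ S, appTA K A V (b ⊗ₜ[K] z) u ∈ S)
    (t : A ⊗[K] V) : ∀ u ∈ S, appTA K A V t u ∈ S := by
  induction t using TensorProduct.induction_on with
  | zero => simp [S.zero_mem]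
  | tmul b z => exact happ b z
  | add p q hp hq =>
    intro u hu
    rw [map_add, LinearMap.add_apply]
    exact S.add_mem (hp u hu) (hq u hu)

theorem TAlg.submodule_eq_top {S : Submodule K (TAlg K A V)}
    (hι : ∀ z : V, iotaTA K A V z ∈ S)
    (happ : ∀ (b : A) (z : V), ∀ u ∈ S, appTA K A V (b ⊗ₜ[K] z) u ∈ S) : S = ⊤ := by
  have hmulι : ∀ t : A ⊗[K] V, ∀ w ∈ tensorAlgebraSlice S,
      w * TensorAlgebra.ι K t ∈ tensorAlgebraSlice S := by
    simp only [mem_tensorAlgebraSlice]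
    exact fun t w hw x => by simpa using appTA_mem_of_tmul_mem happ t _ (hw x)
  have hslice (w : TensorAlgebra K (A ⊗[K] V)) : w ∈ tensorAlgebraSlice S := by
    simpa using TensorAlgebra.mul_mem_of_mul_ι_mem hmulι w 1 (mem_tensorAlgebraSlice.2 hι)
  refine Submodule.eq_top_iff'.2 fun u => ?_
  induction u using TensorProduct.induction_on with
  | zero => exact S.zero_mem
  | tmul x w => exact mem_tensorAlgebraSlice.1 (hslice w) x
  | add u v hu hv => exact S.add_mem hu hv

end TypedWords

section UniversalProperty

variable {K : Type} [Field K] {A : Type} [AddCommGroup A] [Module K A]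
variable {V : Type} [AddCommGroup V] [Module K V] {W : Type} [AddCommGroup W] [Module K W]

/-- The operator through which the universal map turns appending `a z` into `⋄_a θ z`. -/
noncomputable def appEnd (stW : A →ₗ[K] W →ₗ[K] W →ₗ[K] W) (θ : V →ₗ[K] W) :
    A ⊗[K] V →ₗ[K] Module.End K W :=
  TensorProduct.lift (LinearMap.lcomp K (W →ₗ[K] W) θ ∘ₗ LinearMap.lflip.toLinearMap ∘ₗ stW)

@[simp]
lemma appEnd_tmul (stW : A →ₗ[K] W →ₗ[K] W →ₗ[K] W) (θ : V →ₗ[K] W) (a : A) (z : V) (y : W) :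
    appEnd stW θ (a ⊗ₜ[K] z) y = stW a y (θ z) := by
  simp [appEnd]

/-- Appending on the right reverses composition, whence the opposite algebra. -/
noncomputable def appAlgHom (stW : A →ₗ[K] W →ₗ[K] W →ₗ[K] W) (θ : V →ₗ[K] W) :
    TensorAlgebra K (A ⊗[K] V) →ₐ[K] (Module.End K W)ᵐᵒᵖ :=
  TensorAlgebra.lift K ((MulOpposite.opLinearEquiv K).toLinearMap ∘ₗ appEnd stW θ)

noncomputable def liftTA (stW : A →ₗ[K] W →ₗ[K] W →ₗ[K] W) (θ : V →ₗ[K] W) :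
    TAlg K A V →ₗ[K] W :=
  TensorProduct.lift ((LinearMap.lcomp K W θ ∘ₗ
    (MulOpposite.opLinearEquiv K).symm.toLinearMap ∘ₗ (appAlgHom stW θ).toLinearMap).flip)

variable (stW : A →ₗ[K] W →ₗ[K] W →ₗ[K] W) (θ : V →ₗ[K] W)

lemma liftTA_tmul (x : V) (w : TensorAlgebra K (A ⊗[K] V)) :
    liftTA stW θ (x ⊗ₜ[K] w) = (appAlgHom stW θ w).unop (θ x) := by
  simp [liftTA]

@[simp]
lemma liftTA_iotaTA (z : V) : liftTA stW θ (iotaTA K A V z) = θ z := by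
  simp [iotaTA_apply, liftTA_tmul]

@[simp]
lemma liftTA_appTA (t : A ⊗[K] V) (u : TAlg K A V) :
    liftTA stW θ (appTA K A V t u) = appEnd stW θ t (liftTA stW θ u) := by
  induction u using TensorProduct.induction_on with
  | zero => simp
  | tmul x w => simp [liftTA_tmul, appAlgHom]
  | add u v hu hv => simp only [map_add, hu, hv]

lemma liftTA_recTA (st : A →ₗ[K] TAlg K A V →ₗ[K] TAlg K A V →ₗ[K] TAlg K A V)
    {u v : TAlg K A V}
    (hv : ∀ d : A, liftTA stW θ (st d u v) = stW d (liftTA stW θ u) (liftTA stW θ v))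
    (p : A ⊗[K] A) (z : V) :
    liftTA stW θ (recTA K A V st (p ⊗ₜ[K] ((u ⊗ₜ[K] v) ⊗ₜ[K] z)))
      = rightTri K A W stW (p ⊗ₜ[K] ((liftTA stW θ u ⊗ₜ[K] liftTA stW θ v) ⊗ₜ[K] θ z)) := by
  induction p using TensorProduct.induction_on with
  | zero => simp
  | tmul c d => simp [hv]
  | add p q hp hq => simp only [TensorProduct.add_tmul, map_add, hp, hq]

variable {Φ : A ⊗[K] A →ₗ[K] A ⊗[K] A}
variable {st : A →ₗ[K] TAlg K A V →ₗ[K] TAlg K A V →ₗ[K] TAlg K A V}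

theorem liftTA_st (hst : SatisfiesRecTA K A V Φ st) (hW : IsPhiAssoc K A W Φ stW)
    (a : A) (u v : TAlg K A V) :
    liftTA stW θ (st a u v) = stW a (liftTA stW θ u) (liftTA stW θ v) := by
  let S : Submodule K (TAlg K A V) :=
    { carrier := {v | ∀ (a : A) (u : TAlg K A V),
        liftTA stW θ (st a u v) = stW a (liftTA stW θ u) (liftTA stW θ v)}
      add_mem' := fun hv hv' a u => by simp only [map_add, hv a u, hv' a u]
      zero_mem' := fun a u => by simp
      smul_mem' := fun c v hv a u => by simp only [map_smul, hv a u] }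
  suffices S = ⊤ from Submodule.eq_top_iff'.1 this v a u
  refine TAlg.submodule_eq_top (fun z a u => ?_) (fun b z v hv a u => ?_)
  · rw [hst.1, liftTA_appTA, liftTA_iotaTA, appEnd_tmul]
  · rw [hst.2, liftTA_recTA stW θ st (fun d => hv d u), liftTA_appTA, appEnd_tmul, hW]

theorem map_appTA_of_map_st {Θ : TAlg K A V →ₗ[K] W} (hst : SatisfiesRecTA K A V Φ st)
    (hι : ∀ z : V, Θ (iotaTA K A V z) = θ z)
    (hmul : ∀ (a : A) (u v : TAlg K A V), Θ (st a u v) = stW a (Θ u) (Θ v))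
    (b : A) (z : V) (u : TAlg K A V) :
    Θ (appTA K A V (b ⊗ₜ[K] z) u) = stW b (Θ u) (θ z) := by
  rw [← hst.1, hmul, hι]

theorem eq_liftTA {Θ : TAlg K A V →ₗ[K] W} (hst : SatisfiesRecTA K A V Φ st)
    (hι : ∀ z : V, Θ (iotaTA K A V z) = θ z)
    (hmul : ∀ (a : A) (u v : TAlg K A V), Θ (st a u v) = stW a (Θ u) (Θ v)) :
    Θ = liftTA stW θ := by
  refine LinearMap.eqLocus_eq_top.1 (TAlg.submodule_eq_top (fun z => ?_) (fun b z u hu => ?_))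
  · rw [LinearMap.mem_eqLocus, hι, liftTA_iotaTA]
  · simp [map_appTA_of_map_st stW θ hst hι hmul, LinearMap.mem_eqLocus.1 hu]

end UniversalProperty

theorem free_phi_assoc_universal_property_general
    (K : Type) [Field K] (A : Type) [AddCommGroup A] [Module K A]
    (Φ : A ⊗[K] A →ₗ[K] A ⊗[K] A)
    (V : Type) [AddCommGroup V] [Module K V]
    (st : A →ₗ[K] TAlg K A V →ₗ[K] TAlg K A V →ₗ[K] TAlg K A V)
    (hst : SatisfiesRecTA K A V Φ st)
    (W : Type) [AddCommGroup W] [Module K W]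
    (stW : A →ₗ[K] W →ₗ[K] W →ₗ[K] W) (hW : IsPhiAssoc K A W Φ stW)
    (θ : V →ₗ[K] W) :
    ∃! Θ : TAlg K A V →ₗ[K] W,
      (∀ z : V, Θ (iotaTA K A V z) = θ z) ∧
      (∀ (a : A) (u v : TAlg K A V), Θ (st a u v) = stW a (Θ u) (Θ v)) :=
  ⟨liftTA stW θ, ⟨liftTA_iotaTA stW θ, liftTA_st stW θ hst hW⟩,
    fun _ ⟨hι, hmul⟩ => eq_liftTA stW θ hst hι hmul⟩

/-- Theorem 3.2, freeness. Let `(A, Φ)` be a linear extended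
associative semigroup and `V` a vector space; equip `T_A(V)` with the recursively defined
products `*_a`. Then `(T_A(V), *)` is the free `Φ`-associative algebra generated by `V`:
for every `Φ`-associative algebra `(W, ⋄)` and every linear map `θ : V → W` there is a
unique linear map `Θ : T_A(V) → W` restricting to `θ` on `V` and commuting with all the
products. -/
theorem free_phi_assoc_universal_property
    (K : Type) [Field K] (A : Type) [AddCommGroup A] [Module K A]
    (Φ : A ⊗[K] A →ₗ[K] A ⊗[K] A) (hΦ : IsLEAS K A Φ)
    (V : Type) [AddCommGroup V] [Module K V]
    (st : A →ₗ[K] TAlg K A V →ₗ[K] TAlg K A V →ₗ[K] TAlg K A V)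
    (hst : SatisfiesRecTA K A V Φ st)
    (W : Type) [AddCommGroup W] [Module K W]
    (stW : A →ₗ[K] W →ₗ[K] W →ₗ[K] W) (hW : IsPhiAssoc K A W Φ stW)
    (θ : V →ₗ[K] W) :
    ∃! Θ : TAlg K A V →ₗ[K] W,
      (∀ z : V, Θ (iotaTA K A V z) = θ z) ∧
      (∀ (a : A) (u v : TAlg K A V), Θ (st a u v) = stW a (Θ u) (Θ v)) :=
  free_phi_assoc_universal_property_general K A Φ V st hst W stW hW θ
end

section
/- Let K be a field and (A,Φ) a nondegenerate linear extended associative semigroup over K (i.e. Φ is a linear bijection). Let V be a K-vector space with a linear map * : A → Hom(V ⊗ V, V), a ↦ *_a, and define a bilinear product ⋆ on V ⊗ A by (x ⊗ a) ⋆ (y ⊗ b) = Σ_i (x *_{d_i} y) ⊗ c_i, where Φ(a⊗b) = Σ_i c_i ⊗ d_i. If ⋆ is associative, then (V,*) is a Φ-associative algebra. -/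
open TensorProduct

/-!
Fix `x y z : V`. Expanding both sides of
`((x ⊗ p) ⋆ (y ⊗ q)) ⋆ (z ⊗ r) = (x ⊗ p) ⋆ ((y ⊗ q) ⋆ (z ⊗ r))` in Sweedler notation gives
`R ∘ (Φ ⊗ Id) ∘ (Id ⊗ Φ) = L ∘ (Φ ⊗ Id) ∘ (Id ⊗ τ) ∘ (Φ ⊗ Id)` on `A ⊗ A ⊗ A`, where
`R (w ⊗ b ⊗ c) = x *_b (y *_c z) ⊗ w` and `L (w ⊗ c ⊗ d) = (x *_d y) *_c z ⊗ w`.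
By the ℓEAS identity the right-hand side is `L ∘ (Id ⊗ Φ) ∘ (Φ ⊗ Id) ∘ (Id ⊗ Φ)`, and since `Φ`
is onto, `(Φ ⊗ Id) ∘ (Id ⊗ Φ)` cancels: `R = L ∘ (Id ⊗ Φ)`. Evaluating at `a ⊗ a ⊗ b` and
cancelling the tensor factor `a ≠ 0` gives the `Φ`-associativity identity.
-/

namespace PhiAssoc

variable {K : Type} [Field K] {A : Type} [AddCommGroup A] [Module K A]
  {V : Type} [AddCommGroup V] [Module K V]

theorem tmul_left_injective {w : A} (hw : w ≠ 0) :
    Function.Injective fun v : V => v ⊗ₜ[K] w := by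
  obtain ⟨f, hf⟩ := Module.Projective.exists_dual_eq_one K hw
  intro v v' h
  simpa [hf] using congrArg ((TensorProduct.rid K V).toLinearMap ∘ₗ LinearMap.lTensor V f) h

theorem phiIdMap_surjective {Φ : A ⊗[K] A →ₗ[K] A ⊗[K] A} (hΦ : Function.Surjective Φ) :
    Function.Surjective (phiIdMap K A Φ) := by
  simpa [phiIdMap] using (TensorProduct.assoc K A A A).surjective.comp
    ((LinearMap.rTensor_surjective A hΦ).comp (TensorProduct.assoc K A A A).symm.surjective)

@[simp] theorem evalSt_tmul (st : A →ₗ[K] V →ₗ[K] V →ₗ[K] V) (a : A) (x y : V) :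
    evalSt K A V st (a ⊗ₜ (x ⊗ₜ y)) = st a x y := by
  simp [evalSt]

@[simp] theorem sweedlerMul_tmul (st : A →ₗ[K] V →ₗ[K] V →ₗ[K] V) (x y : V) (c d : A) :
    sweedlerMul K A V st ((x ⊗ₜ y) ⊗ₜ (c ⊗ₜ d)) = st d x y ⊗ₜ c := by
  simp [sweedlerMul]

@[simp] theorem rightTri_tmul (st : A →ₗ[K] V →ₗ[K] V →ₗ[K] V) (c d : A) (x y z : V) :
    rightTri K A V st ((c ⊗ₜ d) ⊗ₜ ((x ⊗ₜ y) ⊗ₜ z)) = st c (st d x y) z := by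
  simp [rightTri]

@[simp] theorem phiIdMap_tmul (Φ : A ⊗[K] A →ₗ[K] A ⊗[K] A) (p q r : A) :
    phiIdMap K A Φ (p ⊗ₜ (q ⊗ₜ r)) = TensorProduct.assoc K A A A (Φ (p ⊗ₜ q) ⊗ₜ r) := by
  simp [phiIdMap]

section Nested

variable (st : A →ₗ[K] V →ₗ[K] V →ₗ[K] V) (x y z : V)

noncomputable def rightNestedEval : A ⊗[K] (A ⊗[K] A) →ₗ[K] V ⊗[K] A :=
  (TensorProduct.comm K A V).toLinearMap ∘ₗ
    LinearMap.lTensor A (TensorProduct.lift ((st.flip x).compl₂ ((st.flip y).flip z)))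

noncomputable def leftNestedEval : A ⊗[K] (A ⊗[K] A) →ₗ[K] V ⊗[K] A :=
  (TensorProduct.comm K A V).toLinearMap ∘ₗ
    LinearMap.lTensor A (rightTri K A V st ∘ₗ (TensorProduct.mk K _ _).flip ((x ⊗ₜ y) ⊗ₜ z))

@[simp] theorem rightNestedEval_tmul (w b c : A) :
    rightNestedEval st x y z (w ⊗ₜ (b ⊗ₜ c)) = st b x (st c y z) ⊗ₜ w := by
  simp [rightNestedEval]

@[simp] theorem leftNestedEval_tmul (w : A) (s : A ⊗[K] A) :
    leftNestedEval st x y z (w ⊗ₜ s) = rightTri K A V st (s ⊗ₜ ((x ⊗ₜ y) ⊗ₜ z)) ⊗ₜ w := by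
  simp [leftNestedEval]

end Nested

section StarProduct

variable {st : A →ₗ[K] V →ₗ[K] V →ₗ[K] V} {Φ : A ⊗[K] A →ₗ[K] A ⊗[K] A}
  {mul : V ⊗[K] A →ₗ[K] V ⊗[K] A →ₗ[K] V ⊗[K] A}

variable (st Φ mul) in
def IsStarProduct : Prop :=
  ∀ (x y : V) (a b : A), mul (x ⊗ₜ a) (y ⊗ₜ b) = sweedlerMul K A V st ((x ⊗ₜ y) ⊗ₜ Φ (a ⊗ₜ b))

theorem mul_tmul_sweedlerMul
    (hmul : IsStarProduct st Φ mul) (x y z : V) (p : A) (s : A ⊗[K] A) :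
    mul (x ⊗ₜ p) (sweedlerMul K A V st ((y ⊗ₜ z) ⊗ₜ s))
      = rightNestedEval st x y z (phiIdMap K A Φ (p ⊗ₜ s)) := by
  induction s using TensorProduct.induction_on with
  | zero => simp
  | add s s' hs hs' => simp only [tmul_add, map_add, hs, hs']
  | tmul c d =>
    rw [sweedlerMul_tmul, hmul, phiIdMap_tmul]
    induction Φ (p ⊗ₜ c) using TensorProduct.induction_on with
    | zero => simp
    | tmul c' d' => simp
    | add t t' ht ht' => simp only [tmul_add, add_tmul, map_add, ht, ht']

theorem sweedlerMul_mul_tmul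
    (hmul : IsStarProduct st Φ mul) (x y z : V) (r : A) (s : A ⊗[K] A) :
    mul (sweedlerMul K A V st ((x ⊗ₜ y) ⊗ₜ s)) (z ⊗ₜ r)
      = leftNestedEval st x y z (phiIdMap K A Φ
          (LinearMap.lTensor A (TensorProduct.comm K A A).toLinearMap
            (TensorProduct.assoc K A A A (s ⊗ₜ r)))) := by
  induction s using TensorProduct.induction_on with
  | zero => simp
  | add s s' hs hs' => simp only [tmul_add, add_tmul, map_add, LinearMap.add_apply, hs, hs']
  | tmul c d =>
    rw [sweedlerMul_tmul, hmul]
    simp only [TensorProduct.assoc_tmul, LinearMap.lTensor_tmul, LinearEquiv.coe_coe,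
      TensorProduct.comm_tmul, phiIdMap_tmul]
    induction Φ (c ⊗ₜ r) using TensorProduct.induction_on with
    | zero => simp
    | tmul c' d' => simp
    | add t t' ht ht' => simp only [tmul_add, add_tmul, map_add, ht, ht']

theorem rightNestedEval_comp_eq
    (hmul : IsStarProduct st Φ mul)
    (hassoc : ∀ u v w : V ⊗[K] A, mul (mul u v) w = mul u (mul v w)) (x y z : V) :
    rightNestedEval st x y z ∘ₗ phiIdMap K A Φ ∘ₗ LinearMap.lTensor A Φ
      = leftNestedEval st x y z ∘ₗ phiIdMap K A Φ ∘ₗ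
          LinearMap.lTensor A (TensorProduct.comm K A A).toLinearMap ∘ₗ phiIdMap K A Φ := by
  ext p q r
  simp only [TensorProduct.AlgebraTensorModule.curry_apply, TensorProduct.curry_apply,
    LinearMap.coe_restrictScalars, LinearMap.coe_comp, Function.comp_apply,
    LinearMap.lTensor_tmul, phiIdMap_tmul]
  rw [← mul_tmul_sweedlerMul hmul, ← hmul, ← sweedlerMul_mul_tmul hmul, ← hmul, hassoc]

theorem rightNestedEval_eq (hΦ : IsLEAS K A Φ) (hsurj : Function.Surjective Φ)
    (hmul : IsStarProduct st Φ mul)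
    (hassoc : ∀ u v w : V ⊗[K] A, mul (mul u v) w = mul u (mul v w)) (x y z : V) :
    rightNestedEval st x y z = leftNestedEval st x y z ∘ₗ LinearMap.lTensor A Φ := by
  have hsurj₂ : Function.Surjective (phiIdMap K A Φ ∘ₗ LinearMap.lTensor A Φ) :=
    (phiIdMap_surjective hsurj).comp (LinearMap.lTensor_surjective A hsurj)
  rw [← LinearMap.cancel_right hsurj₂, LinearMap.comp_assoc,
    rightNestedEval_comp_eq hmul hassoc, hΦ]

end StarProduct

end PhiAssoc

open PhiAssoc in
/-- Proposition 3.3 (2). Let `(A, Φ)` be a nondegenerate linear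
extended associative semigroup (i.e. `Φ` is bijective), `V` a vector space with a linear
family of products `* : A → Hom(V ⊗ V, V)`, and `⋆` the bilinear product on `V ⊗ A`
determined by `(x ⊗ a) ⋆ (y ⊗ b) = Σ (x *_{d_i} y) ⊗ c_i` where `Φ(a⊗b) = Σ c_i ⊗ d_i`.
If `⋆` is associative, then `(V, *)` is a `Φ`-associative algebra. -/
theorem associative_on_tensor_gives_phi_assoc
    (K : Type) [Field K] (A : Type) [AddCommGroup A] [Module K A]
    (Φ : A ⊗[K] A →ₗ[K] A ⊗[K] A) (hΦ : IsLEAS K A Φ)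
    (hbij : Function.Bijective Φ)
    (V : Type) [AddCommGroup V] [Module K V]
    (st : A →ₗ[K] V →ₗ[K] V →ₗ[K] V)
    (mul : V ⊗[K] A →ₗ[K] V ⊗[K] A →ₗ[K] V ⊗[K] A)
    (hmul : ∀ (x y : V) (a b : A),
      mul (x ⊗ₜ a) (y ⊗ₜ b) = sweedlerMul K A V st ((x ⊗ₜ y) ⊗ₜ (Φ (a ⊗ₜ b))))
    (hassoc : ∀ u v w : V ⊗[K] A, mul (mul u v) w = mul u (mul v w)) :
    IsPhiAssoc K A V Φ st := by
  intro a b x y z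
  rcases eq_or_ne a 0 with rfl | ha
  · simp
  apply tmul_left_injective (K := K) (V := V) ha
  simpa using LinearMap.congr_fun (rightNestedEval_eq hΦ hbij.2 hmul hassoc x y z) (a ⊗ₜ (a ⊗ₜ b))
end

section
/- Let K be a field, (A,Φ) a linear extended associative semigroup over K, and a,b ∈ A. The following are equivalent: (i) for every Φ-associative algebra (V,*) over K, the bilinear product m on V defined by m(x,y) = x *_a y + y *_b x satisfies m(x, m(y,z)) = 0 for all x,y,z ∈ V; (ii) b = 0 and Φ(a ⊗ a) = 0. -/
open TensorProduct

/-!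
(ii) ⇒ (i): for `b = 0`, `m(x, m(y,z)) = x *_a (y *_a z)`, which `Φ`-associativity expands
through `Φ(a ⊗ a) = 0`.

(i) ⇒ (ii): test (i) on typed words of length at most three in three letters `e₀, e₁, e₂`,
truncated above length three. There `m(e₀, m(e₁,e₂))` has coefficient `Φ(a ⊗ a)` at the word
`e₀e₁e₂` and `b ⊗ b` at the word `e₂e₁e₀`, and `b ⊗ b = 0` forces `b = 0` over a field.
-/

theorem TensorProduct.tmul_eq_zero_iff_of_projective {R M N : Type*} [CommRing R] [IsDomain R]
    [AddCommGroup M] [Module R M] [Module.Projective R M]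
    [AddCommGroup N] [Module R N] [Module.Projective R N] {m : M} {n : N} :
    m ⊗ₜ[R] n = 0 ↔ m = 0 ∨ n = 0 := by
  refine ⟨fun h => ?_, by rintro (rfl | rfl) <;> simp⟩
  by_contra! hmn
  obtain ⟨f, hf⟩ := Module.Projective.exists_dual_ne_zero R hmn.1
  obtain ⟨g, hg⟩ := Module.Projective.exists_dual_ne_zero R hmn.2
  have hfg : f m * g n = 0 := by
    simpa using congrArg (LinearMap.mul' R R ∘ₗ TensorProduct.map f g) h
  exact mul_ne_zero hf hg hfg

/-- Typed words of length 1, 2 and 3 in the letters `ι`: the value `c` at `(i, j)` stands for the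
word `eᵢ *_c eⱼ`, and `c ⊗ d` at `(i, j, k)` for `(eᵢ *_d eⱼ) *_c eₖ`. -/
abbrev TruncFree (K A : Type) [Field K] [AddCommGroup A] [Module K A] (ι : Type) : Type :=
  (ι → K) × (ι → ι → A) × (ι → ι → ι → A ⊗[K] A)

namespace TruncFree

variable {K A ι : Type} [Field K] [AddCommGroup A] [Module K A] (Φ : A ⊗[K] A →ₗ[K] A ⊗[K] A)

/-- Products of total length above three are dropped. -/
def mul (c : A) (x y : TruncFree K A ι) : TruncFree K A ι :=
  (0, fun i j => (x.1 i * y.1 j) • c,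
    fun i j k => y.1 k • (c ⊗ₜ x.2.1 i j) + x.1 i • Φ (c ⊗ₜ y.2.1 j k))

noncomputable def mulₗ :
    A →ₗ[K] TruncFree K A ι →ₗ[K] TruncFree K A ι →ₗ[K] TruncFree K A ι where
  toFun c := LinearMap.mk₂ K (mul Φ c)
    (fun x x' y => by ext <;> simp [mul, tmul_add] <;> module)
    (fun r x y => by ext <;> simp [mul] <;> module)
    (fun x y y' => by ext <;> simp [mul, tmul_add] <;> module)
    (fun r x y => by ext <;> simp [mul] <;> module)
  map_add' c c' := LinearMap.ext₂ fun x y => by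
    ext <;> simp [mul, add_tmul]
    module
  map_smul' r c := LinearMap.ext₂ fun x y => by
    ext <;> simp [mul, ← TensorProduct.smul_tmul'] <;> module

@[simp] lemma mulₗ_apply (c : A) (x y : TruncFree K A ι) : mulₗ Φ c x y = mul Φ c x y := rfl

lemma rightTri_mulₗ_tmul (t : A ⊗[K] A) (x y z : TruncFree K A ι) :
    rightTri K A _ (mulₗ Φ) (t ⊗ₜ ((x ⊗ₜ y) ⊗ₜ z)) =
      (0, 0, fun i j k => (x.1 i * y.1 j * z.1 k) • t) := by
  induction t using TensorProduct.induction_on with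
  | zero => ext <;> simp
  | tmul c d =>
    ext <;> simp [rightTri, evalSt, mul, TensorProduct.leftComm_tmul]
    module
  | add t t' ht ht' => ext <;> simp [add_tmul, ht, ht']

lemma isPhiAssoc_mulₗ : IsPhiAssoc K A (TruncFree K A ι) Φ (mulₗ Φ) := by
  intro a b x y z
  rw [rightTri_mulₗ_tmul]
  ext <;> simp [mul]
  module

def letter [DecidableEq ι] (i : ι) : TruncFree K A ι := (Pi.single i 1, 0, 0)

lemma eq_zero_of_forall_squareZero {a b : A}
    (h : ∀ x y z : TruncFree K A (Fin 3),
      mulₗ Φ a x (mulₗ Φ a y z + mulₗ Φ b z y) + mulₗ Φ b (mulₗ Φ a y z + mulₗ Φ b z y) x = 0) :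
    b = 0 ∧ Φ (a ⊗ₜ a) = 0 := by
  have hΦ : Φ (a ⊗ₜ a) = 0 := by
    simpa [mul, letter] using congrArg (·.2.2 0 1 2) (h (letter 0) (letter 1) (letter 2))
  have hb : b ⊗ₜ[K] b = 0 := by
    simpa [mul, letter] using congrArg (·.2.2 2 1 0) (h (letter 0) (letter 1) (letter 2))
  exact ⟨(TensorProduct.tmul_eq_zero_iff_of_projective.mp hb).elim id id, hΦ⟩

end TruncFree

theorem square_zero_products_iff_general
    (K : Type) [Field K] (A : Type) [AddCommGroup A] [Module K A]
    (Φ : A ⊗[K] A →ₗ[K] A ⊗[K] A) (a b : A) :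
    (∀ (V : ModuleCat K) (st : A →ₗ[K] V →ₗ[K] V →ₗ[K] V),
        IsPhiAssoc K A V Φ st →
        ∀ x y z : V,
          st a x (st a y z + st b z y) + st b (st a y z + st b z y) x = 0) ↔
      (b = 0 ∧ Φ (a ⊗ₜ a) = 0) := by
  constructor
  · intro h
    exact TruncFree.eq_zero_of_forall_squareZero Φ fun x y z =>
      h (ModuleCat.of K (TruncFree K A (Fin 3))) (TruncFree.mulₗ Φ) (TruncFree.isPhiAssoc_mulₗ Φ)
        x y z
  · rintro ⟨rfl, hΦ⟩ V st hst x y z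
    simp only [map_zero, LinearMap.zero_apply, add_zero]
    rw [hst, hΦ, zero_tmul, map_zero]

/-- Proposition 3.18, square-zero products. Let `(A, Φ)` be a linear
extended associative semigroup and `a, b ∈ A`. The following are equivalent:
(i) for every `Φ`-associative algebra `(V, *)`, the product `m(x,y) = x *_a y + y *_b x`
satisfies `m(x, m(y,z)) = 0` for all `x, y, z`;
(ii) `b = 0` and `Φ(a⊗a) = 0`. -/
theorem square_zero_products_iff
    (K : Type) [Field K] (A : Type) [AddCommGroup A] [Module K A]
    (Φ : A ⊗[K] A →ₗ[K] A ⊗[K] A) (hΦ : IsLEAS K A Φ) (a b : A) :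
    (∀ (V : ModuleCat K) (st : A →ₗ[K] V →ₗ[K] V →ₗ[K] V),
        IsPhiAssoc K A V Φ st →
        ∀ x y z : V,
          st a x (st a y z + st b z y) + st b (st a y z + st b z y) x = 0) ↔
      (b = 0 ∧ Φ (a ⊗ₜ a) = 0) :=
  square_zero_products_iff_general K A Φ a b
end

section
/- Let (Ω,⋆) be a group and K a field. A function λ : Ω → K satisfies λ(α ⋆ β)·λ(α) = λ(α)·λ(β) for all α,β ∈ Ω if, and only if, either λ is identically zero or there exist a subgroup H of Ω and a nonzero scalar c ∈ K such that λ(α) = c for every α ∈ H and λ(α) = 0 for every α ∉ H. In particular, if λ is a nonzero solution, then its support H = {α ∈ Ω : λ(α) ≠ 0} is a subgroup of Ω and λ is constant on H. -/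
/-!
Putting `β = 1` and cancelling `λ(α) ≠ 0` shows that `λ` equals `λ(1)` on its support. The identity
`λ(αβ)λ(α) = λ(α)λ(β)` has a nonzero right-hand side when `α` and `β` are in the support, so the
support is closed under products; with `β = α⁻¹` it is closed under inverses, and it contains `1`
as soon as it is nonempty. Conversely, for `α ∈ H` one has `αβ ∈ H ↔ β ∈ H`, so both sides of
the identity vanish or are both `c²` in each case.
-/

namespace AssocWeight

variable {G M : Type*} [Group G] [MulZeroClass M] {l : G → M}

section Support

variable [IsLeftCancelMulZero M] (h : ∀ a b : G, l (a * b) * l a = l a * l b)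
include h

theorem apply_eq_apply_one {a : G} (ha : l a ≠ 0) : l a = l 1 :=
  mul_left_cancel₀ ha (by simpa using h a 1)

theorem apply_one_ne_zero {a : G} (ha : l a ≠ 0) : l 1 ≠ 0 :=
  apply_eq_apply_one h ha ▸ ha

theorem apply_mul_ne_zero {a b : G} (ha : l a ≠ 0) (hb : l b ≠ 0) : l (a * b) ≠ 0 :=
  left_ne_zero_of_mul (h a b ▸ mul_ne_zero ha hb)

theorem apply_inv_ne_zero {a : G} (ha : l a ≠ 0) : l a⁻¹ ≠ 0 := by
  have hmul : l a * l a⁻¹ ≠ 0 := by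
    rw [← h a a⁻¹, mul_inv_cancel]
    exact mul_ne_zero (apply_one_ne_zero h ha) ha
  exact right_ne_zero_of_mul hmul

def supportSubgroup (h1 : l 1 ≠ 0) : Subgroup G where
  carrier := {a | l a ≠ 0}
  mul_mem' := apply_mul_ne_zero h
  one_mem' := h1
  inv_mem' := apply_inv_ne_zero h

theorem mem_supportSubgroup (h1 : l 1 ≠ 0) {a : G} : a ∈ supportSubgroup h h1 ↔ l a ≠ 0 :=
  Iff.rfl

end Support

theorem of_subgroup (H : Subgroup G) (c : M) (hin : ∀ a ∈ H, l a = c)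
    (hout : ∀ a ∉ H, l a = 0) (a b : G) : l (a * b) * l a = l a * l b := by
  by_cases ha : a ∈ H
  · by_cases hb : b ∈ H
    · rw [hin _ (H.mul_mem ha hb), hin a ha, hin b hb]
    · have hab : a * b ∉ H := (H.mul_mem_cancel_left ha).not.mpr hb
      rw [hout _ hab, hout b hb, zero_mul, mul_zero]
  · rw [hout a ha, mul_zero, zero_mul]

end AssocWeight

/-- Let `(Ω,⋆)` be a group and `K` a field. A function `λ : Ω → K`
satisfies `λ(α⋆β)·λ(α) = λ(α)·λ(β)` for all `α, β` if, and only if, either `λ ≡ 0` or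
there are a subgroup `H ≤ Ω` and a nonzero scalar `c ∈ K` such that `λ = c` on `H` and
`λ = 0` off `H`. -/
theorem family_associative_products_of_group
    (Ω K : Type) [Group Ω] [Field K] (l : Ω → K) :
    (∀ α β : Ω, l (α * β) * l α = l α * l β) ↔
      ((∀ α, l α = 0) ∨
        ∃ (H : Subgroup Ω) (c : K), c ≠ 0 ∧ (∀ α ∈ H, l α = c) ∧ (∀ α ∉ H, l α = 0)) := by
  constructor
  · intro h
    by_cases hzero : ∀ α, l α = 0
    · exact Or.inl hzero
    obtain ⟨a, ha⟩ := not_forall.mp hzero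
    have h1 := AssocWeight.apply_one_ne_zero h ha
    refine Or.inr ⟨AssocWeight.supportSubgroup h h1, l 1, h1,
      fun α hα => AssocWeight.apply_eq_apply_one h hα, fun α hα => ?_⟩
    exact not_not.mp ((AssocWeight.mem_supportSubgroup h h1).not.mp hα)
  · rintro (hzero | ⟨H, c, -, hin, hout⟩)
    · simp [hzero]
    · exact AssocWeight.of_subgroup H c hin hout
end

section
/- Let (Ω,→,▷) be an extended associative semigroup, K a field, and (V,(*_α)_{α∈Ω}) an Ω-associative algebra, i.e. x *_α (y *_β z) = (x *_{α▷β} y) *_{α→β} z for all α,β ∈ Ω and x,y,z ∈ V. For α,β ∈ Ω set *_{α,β} := *_{α▷β}. Then (V,(*_{α,β})_{α,β∈Ω}) is a two-parameters associative algebra over the semigroup (Ω,→): for all α,β,γ ∈ Ω and x,y,z ∈ V, (x *_{α▷β} y) *_{(α→β)▷γ} z = x *_{α▷(β→γ)} (y *_{β▷γ} z). -/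
theorem omega_assoc_to_two_parameters_general
    (Ω K V : Type) [Field K] [AddCommGroup V] [Module K V]
    (arr tri : Ω → Ω → Ω)
    (heas2 : ∀ α β γ : Ω, arr (tri α (arr β γ)) (tri β γ) = tri (arr α β) γ)
    (heas3 : ∀ α β γ : Ω, tri (tri α (arr β γ)) (tri β γ) = tri α β)
    (st : Ω → V →ₗ[K] V →ₗ[K] V)
    (halg : ∀ (α β : Ω) (x y z : V),
      st α x (st β y z) = st (arr α β) (st (tri α β) x y) z) :
    ∀ (α β γ : Ω) (x y z : V),
      st (tri (arr α β) γ) (st (tri α β) x y) z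
        = st (tri α (arr β γ)) x (st (tri β γ) y z) := by
  intro α β γ x y z
  calc st (tri (arr α β) γ) (st (tri α β) x y) z
      = st (arr (tri α (arr β γ)) (tri β γ))
          (st (tri (tri α (arr β γ)) (tri β γ)) x y) z := by rw [heas2, heas3]
    _ = st (tri α (arr β γ)) x (st (tri β γ) y z) := (halg _ _ x y z).symm

/-- Let `(Ω,→,▷)` be an extended associative semigroup, `K` a field and
`(V, (*_α))` an `Ω`-associative algebra. Setting `*_{α,β} := *_{α▷β}`, one obtains a
two-parameters associative algebra over the semigroup `(Ω,→)`. -/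
theorem omega_assoc_to_two_parameters
    (Ω K V : Type) [Field K] [AddCommGroup V] [Module K V]
    (arr tri : Ω → Ω → Ω)
    (heas1 : ∀ α β γ : Ω, arr α (arr β γ) = arr (arr α β) γ)
    (heas2 : ∀ α β γ : Ω, arr (tri α (arr β γ)) (tri β γ) = tri (arr α β) γ)
    (heas3 : ∀ α β γ : Ω, tri (tri α (arr β γ)) (tri β γ) = tri α β)
    (st : Ω → V →ₗ[K] V →ₗ[K] V)
    (halg : ∀ (α β : Ω) (x y z : V),
      st α x (st β y z) = st (arr α β) (st (tri α β) x y) z) :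
    ∀ (α β γ : Ω) (x y z : V),
      st (tri (arr α β) γ) (st (tri α β) x y) z
        = st (tri α (arr β γ)) x (st (tri β γ) y z) :=
  omega_assoc_to_two_parameters_general Ω K V arr tri heas2 heas3 st halg
end

section
/- Let K be a field and V a K-vector space with two bilinear products *_1, *_2 satisfying, for all x,y,z ∈ V: (i) x *_1 (y *_1 z) + x *_1 (y *_2 z) = (x *_1 y) *_1 z; (ii) x *_2 (y *_1 z) = (x *_2 y) *_1 z; (iii) (x *_1 y) *_2 z = 0; (iv) x *_2 (y *_2 z) = (x *_2 y) *_2 z. Define {x,y} := x *_2 y − y *_2 x and x ▸ y := x *_1 y. Then (V, ▸, {,}) is a post-Lie algebra: {,} is a Lie bracket (bilinear, antisymmetric, satisfying the Jacobi identity), and for all x,y,z ∈ V, x ▸ {y,z} = (x ▸ y) ▸ z − x ▸ (y ▸ z) − (x ▸ z) ▸ y + x ▸ (z ▸ y), and {x,y} ▸ z = {x ▸ z, y} + {x, y ▸ z}. -/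
/-!
The bracket is the commutator of `*₂`, which is associative by (iv), so it is a Lie bracket.
Relation (i) expresses `x ▸ (y *₂ z)` through `▸` alone; antisymmetrising in `y, z` gives the
first compatibility identity. Relations (ii) and (iii) say that `*₂` commutes with right
multiplication by `*₁` and is killed on the left by `*₁`-products, which gives the second.
-/

section

variable {R M : Type*} [CommRing R] [AddCommGroup M] [Module R M]

theorem LinearMap.commutator_jacobi_of_assoc (s : M →ₗ[R] M →ₗ[R] M)
    (hs : ∀ x y z, s x (s y z) = s (s x y) z) (x y z : M) :
    (s x (s y z - s z y) - s (s y z - s z y) x) + (s y (s z x - s x z) - s (s z x - s x z) y)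
      + (s z (s x y - s y x) - s (s x y - s y x) z) = 0 := by
  simp only [map_sub, LinearMap.sub_apply, hs]
  abel

variable (s₁ s₂ : M →ₗ[R] M →ₗ[R] M)

theorem act_commutator_eq_of_left_rel
    (h1 : ∀ x y z, s₁ x (s₁ y z) + s₁ x (s₂ y z) = s₁ (s₁ x y) z) (x y z : M) :
    s₁ x (s₂ y z - s₂ z y)
      = s₁ (s₁ x y) z - s₁ x (s₁ y z) - s₁ (s₁ x z) y + s₁ x (s₁ z y) := by
  have act_mul (y z : M) : s₁ x (s₂ y z) = s₁ (s₁ x y) z - s₁ x (s₁ y z) :=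
    eq_sub_of_add_eq' (h1 x y z)
  rw [map_sub, act_mul, act_mul]
  abel

theorem commutator_act_eq_of_right_rel
    (h2 : ∀ x y z, s₂ x (s₁ y z) = s₁ (s₂ x y) z) (h3 : ∀ x y z, s₂ (s₁ x y) z = 0)
    (x y z : M) :
    s₁ (s₂ x y - s₂ y x) z
      = (s₂ (s₁ x z) y - s₂ y (s₁ x z)) + (s₂ x (s₁ y z) - s₂ (s₁ y z) x) := by
  simp only [map_sub, LinearMap.sub_apply, h2, h3]
  abel

end

/-- Let `V` be a vector space over a field `K` with two bilinear
products `*₁` (`s₁`) and `*₂` (`s₂`) satisfying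
(i)  `x *₁ (y *₁ z) + x *₁ (y *₂ z) = (x *₁ y) *₁ z`,
(ii) `x *₂ (y *₁ z) = (x *₂ y) *₁ z`,
(iii) `(x *₁ y) *₂ z = 0`,
(iv) `x *₂ (y *₂ z) = (x *₂ y) *₂ z`.
Define `{x,y} := x *₂ y − y *₂ x` and `x ▸ y := x *₁ y`. Then `(V, ▸, {,})` is a
post-Lie algebra: the bracket is antisymmetric and satisfies the Jacobi identity, and the
two post-Lie compatibility identities hold. -/
theorem opposite_phi_assoc_gives_postLie
    (K V : Type) [Field K] [AddCommGroup V] [Module K V]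
    (s₁ s₂ : V →ₗ[K] V →ₗ[K] V)
    (h1 : ∀ x y z : V, s₁ x (s₁ y z) + s₁ x (s₂ y z) = s₁ (s₁ x y) z)
    (h2 : ∀ x y z : V, s₂ x (s₁ y z) = s₁ (s₂ x y) z)
    (h3 : ∀ x y z : V, s₂ (s₁ x y) z = 0)
    (h4 : ∀ x y z : V, s₂ x (s₂ y z) = s₂ (s₂ x y) z) :
    letI br : V → V → V := fun x y => s₂ x y - s₂ y x
    letI act : V → V → V := fun x y => s₁ x y
    (∀ x y : V, br x y = - br y x) ∧
    (∀ x y z : V, br x (br y z) + br y (br z x) + br z (br x y) = 0) ∧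
    (∀ x y z : V,
      act x (br y z)
        = act (act x y) z - act x (act y z) - act (act x z) y + act x (act z y)) ∧
    (∀ x y z : V, act (br x y) z = br (act x z) y + br x (act y z)) :=
  ⟨fun _ _ => (neg_sub _ _).symm,
    s₂.commutator_jacobi_of_assoc h4,
    act_commutator_eq_of_left_rel s₁ s₂ h1,
    commutator_act_eq_of_right_rel s₁ s₂ h2 h3⟩
end
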